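/- arXiv:1509.05168 — 7 statements merged into one kernel-verified Lean document; each statement's English description precedes it below -/
import Mathlib

section
/- Let x ∈ ℝ × ℝ^{n-1} and let a be an element of the Lorentz cone K^n such that x^T a' > 0, where a' = (a₀, -ā) is the reflection of a. Then there exists T ≥ 0 such that for all t > T, the point x + t·a lies in the interior of K^n. -/
open Filter
open scoped RealInnerProductSpace

/-!
With `q z = z₀² - ‖z̄‖²`, one has `q (x + t a) = q x + 2t (x₀a₀ - ⟪x̄, ā⟫) + t² q a` and `q a ≥ 0`,
so `q (x + t a)` grows at least linearly in `t`. Moreover `a₀ > 0` (otherwise `ā = 0` and the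
pairing vanishes), so the first coordinate of `x + t a` also tends to `+∞`. A point with
positive first coordinate and positive `q` satisfies `‖z̄‖ < z₀`, hence lies in the open cone.
-/

def lorentzCone (E : Type*) [Norm E] : Set (ℝ × E) := {z | ‖z.2‖ ≤ z.1}

section Norm

variable {E : Type*} [Norm E]

def lorentzForm (z : ℝ × E) : ℝ := z.1 ^ 2 - ‖z.2‖ ^ 2

lemma norm_snd_lt_fst {z : ℝ × E} (hz₁ : 0 < z.1) (hz : 0 < lorentzForm z) : ‖z.2‖ < z.1 :=
  lt_of_pow_lt_pow_left₀ 2 hz₁.le (sub_pos.1 hz)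

end Norm

section Seminormed

variable {E : Type*} [SeminormedAddGroup E]

lemma lorentzForm_nonneg {a : ℝ × E} (ha : a ∈ lorentzCone E) : 0 ≤ lorentzForm a :=
  sub_nonneg.2 (pow_le_pow_left₀ (norm_nonneg _) ha 2)

lemma setOf_norm_snd_lt_fst_subset_interior_lorentzCone :
    {z : ℝ × E | ‖z.2‖ < z.1} ⊆ interior (lorentzCone E) :=
  interior_maximal (fun _ hz => le_of_lt (α := ℝ) hz)
    (isOpen_lt (continuous_norm.comp continuous_snd) continuous_fst)

end Seminormed

variable {E : Type*} [NormedAddCommGroup E] [InnerProductSpace ℝ E]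

def lorentzPairing (x y : ℝ × E) : ℝ := x.1 * y.1 - ⟪x.2, y.2⟫

lemma lorentzForm_add_smul (x a : ℝ × E) (t : ℝ) :
    lorentzForm (x + t • a) =
      lorentzForm x + 2 * t * lorentzPairing x a + t ^ 2 * lorentzForm a := by
  simp only [lorentzForm, lorentzPairing, Prod.fst_add, Prod.snd_add, Prod.smul_fst,
    Prod.smul_snd, smul_eq_mul, norm_add_sq_real, real_inner_smul_right, norm_smul,
    Real.norm_eq_abs, mul_pow, sq_abs]
  ring

lemma fst_pos_of_lorentzPairing_pos {x a : ℝ × E} (ha : a ∈ lorentzCone E)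
    (hxa : 0 < lorentzPairing x a) : 0 < a.1 := by
  refine lt_of_le_of_ne ((norm_nonneg _).trans ha) fun h => hxa.ne' ?_
  have : a.2 = 0 := norm_le_zero_iff.1 (h ▸ ha)
  simp [lorentzPairing, ← h, this]

lemma eventually_mem_interior_lorentzCone {x a : ℝ × E} (ha : a ∈ lorentzCone E)
    (hxa : 0 < lorentzPairing x a) :
    ∀ᶠ t : ℝ in atTop, x + t • a ∈ interior (lorentzCone E) := by
  have hfst : Tendsto (fun t : ℝ => x.1 + t * a.1) atTop atTop :=
    tendsto_atTop_add_const_left _ _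
      (tendsto_id.atTop_mul_const (fst_pos_of_lorentzPairing_pos ha hxa))
  have hform : Tendsto (fun t : ℝ => lorentzForm x + t * (2 * lorentzPairing x a)) atTop atTop :=
    tendsto_atTop_add_const_left _ _ (tendsto_id.atTop_mul_const (by positivity))
  filter_upwards [hfst.eventually_gt_atTop 0, hform.eventually_gt_atTop 0,
    eventually_ge_atTop 0] with t h₁ h₂ ht
  refine setOf_norm_snd_lt_fst_subset_interior_lorentzCone
    (norm_snd_lt_fst (by simpa using h₁) ?_)
  rw [lorentzForm_add_smul]
  nlinarith [lorentzForm_nonneg ha]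

/-- **Lemma 1.**  Let `x ∈ ℝ × ℝ^k` and let `a` be an element of the Lorentz cone
`K^{k+1} = {z = (z₀, z̄) : ‖z̄‖ ≤ z₀}` such that `xᵀa' > 0`, where `a' = (a₀, -ā)` is the
reflection of `a` (so `xᵀa' = x₀a₀ - ⟪x̄, ā⟫`).  Then there exists `T ≥ 0` such that for all
`t > T`, the point `x + t • a` lies in the interior of the Lorentz cone. -/
theorem lorentz_eventually_interior {k : ℕ} (x a : ℝ × EuclideanSpace ℝ (Fin k))
    (ha : a ∈ {z : ℝ × EuclideanSpace ℝ (Fin k) | ‖z.2‖ ≤ z.1})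
    (hxa : 0 < x.1 * a.1 - ⟪x.2, a.2⟫) :
    ∃ T : ℝ, 0 ≤ T ∧ ∀ t : ℝ, T < t →
      x + t • a ∈ interior {z : ℝ × EuclideanSpace ℝ (Fin k) | ‖z.2‖ ≤ z.1} := by
  obtain ⟨T, hT⟩ := eventually_atTop.1 (eventually_mem_interior_lorentzCone ha hxa)
  exact ⟨max T 0, le_max_right _ _, fun t ht => hT t ((le_max_left _ _).trans ht.le)⟩
end

section
/- If x and y both belong to the Lorentz cone K^n and x^T y = 0, then x₀·ȳ + y₀·x̄ = 0, where x = (x₀, x̄) and y = (y₀, ȳ). -/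
open scoped RealInnerProductSpace

theorem norm_smul_add_smul_sq_le {E : Type*} [NormedAddCommGroup E] [InnerProductSpace ℝ E]
    {a b : ℝ} {u v : E} (hu : ‖u‖ ≤ a) (hv : ‖v‖ ≤ b) :
    ‖a • v + b • u‖ ^ 2 ≤ 2 * (a * b) * (a * b + ⟪u, v⟫) := by
  have ha : 0 ≤ a := (norm_nonneg u).trans hu
  have hb : 0 ≤ b := (norm_nonneg v).trans hv
  have hv2 : a ^ 2 * ‖v‖ ^ 2 ≤ a ^ 2 * b ^ 2 := by gcongr
  have hu2 : b ^ 2 * ‖u‖ ^ 2 ≤ b ^ 2 * a ^ 2 := by gcongr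
  calc ‖a • v + b • u‖ ^ 2
      = a ^ 2 * ‖v‖ ^ 2 + b ^ 2 * ‖u‖ ^ 2 + 2 * (a * b) * ⟪u, v⟫ := by
        rw [norm_add_sq_real, norm_smul, norm_smul, real_inner_smul_left, real_inner_smul_right,
          real_inner_comm, Real.norm_of_nonneg ha, Real.norm_of_nonneg hb]
        ring
    _ ≤ 2 * (a * b) * (a * b + ⟪u, v⟫) := by linarith

/-- If `x = (x₀, x̄)` and `y = (y₀, ȳ)` both belong to the Lorentz cone
`K^{k+1} = {z = (z₀, z̄) : ‖z̄‖ ≤ z₀}` and `xᵀy = x₀y₀ + ⟪x̄, ȳ⟫ = 0`, then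
`x₀ • ȳ + y₀ • x̄ = 0`. -/
theorem lorentz_orthogonal {k : ℕ} (x y : ℝ × EuclideanSpace ℝ (Fin k))
    (hx : ‖x.2‖ ≤ x.1) (hy : ‖y.2‖ ≤ y.1)
    (hxy : x.1 * y.1 + ⟪x.2, y.2⟫ = 0) :
    x.1 • y.2 + y.1 • x.2 = 0 := by
  have h := norm_smul_add_smul_sq_le hx hy
  rw [hxy, mul_zero] at h
  simpa using h
end

section
/- Let a be a nonzero element of the boundary of the Lorentz cone K^n (i.e., a ∈ K^n, a ≠ 0, and a₀ = ‖ā‖), and let s ∈ K^n satisfy s^T a = 0. Then there exists λ ≥ 0 such that s = λ·a', where a' = (a₀, -ā) is the reflection of a. -/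
open scoped RealInnerProductSpace

/-! With `a₀ = ‖ā‖ > 0`, Cauchy–Schwarz and `‖s̄‖ ≤ s₀` give
`s₀a₀ = -⟪s̄, ā⟫ ≤ ‖s̄‖‖ā‖ ≤ s₀a₀`, so both inequalities are equalities: `‖s̄‖ = s₀`, and
`s̄` is a nonnegative multiple of `-ā` by the equality case of Cauchy–Schwarz. -/

theorem eq_smul_neg_of_mul_norm_add_inner_eq_zero {E : Type*} [NormedAddCommGroup E]
    [InnerProductSpace ℝ E] {x y : E} {c : ℝ} (hx : ‖x‖ ≤ c) (hy : y ≠ 0)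
    (h : c * ‖y‖ + ⟪x, y⟫ = 0) : x = (c / ‖y‖) • -y := by
  have hy_pos : 0 < ‖y‖ := norm_pos_iff.mpr hy
  have hcs : -(‖x‖ * ‖y‖) ≤ ⟪x, y⟫ := neg_le_of_abs_le (abs_real_inner_le_norm x y)
  have hnorm : ‖x‖ = c := by nlinarith
  have hinner : ⟪x, -y⟫ = ‖x‖ * ‖-y‖ := by
    rw [inner_neg_right, norm_neg, hnorm]
    linarith
  have hpar : ‖-y‖ • x = ‖x‖ • -y := inner_eq_norm_mul_iff_real.mp hinner
  rw [norm_neg, hnorm] at hpar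
  rw [div_eq_inv_mul, mul_smul, ← hpar, smul_smul, inv_mul_cancel₀ hy_pos.ne', one_smul]

theorem lorentz_orthogonal_boundary_general {k : ℕ} (a s : ℝ × EuclideanSpace ℝ (Fin k))
    (ha0 : a ≠ 0) (hbd : a.1 = ‖a.2‖)
    (hs : ‖s.2‖ ≤ s.1) (hsa : s.1 * a.1 + ⟪s.2, a.2⟫ = 0) :
    ∃ lam : ℝ, 0 ≤ lam ∧ s = lam • ((a.1, -a.2) : ℝ × EuclideanSpace ℝ (Fin k)) := by
  have ha2 : a.2 ≠ 0 := fun h => ha0 (Prod.ext (by simp [hbd, h]) h)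
  have ha1 : a.1 ≠ 0 := hbd ▸ norm_ne_zero_iff.mpr ha2
  refine ⟨s.1 / a.1, div_nonneg ((norm_nonneg _).trans hs) (hbd ▸ norm_nonneg _),
    Prod.ext (div_mul_cancel₀ _ ha1).symm ?_⟩
  rw [hbd] at hsa ⊢
  exact eq_smul_neg_of_mul_norm_add_inner_eq_zero hs ha2 hsa

/-- Let `a` be a nonzero element of the boundary of the Lorentz cone
`K^{k+1} = {z = (z₀, z̄) : ‖z̄‖ ≤ z₀}` (i.e. `a ∈ K^{k+1}`, `a ≠ 0` and `a₀ = ‖ā‖`), and let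
`s ∈ K^{k+1}` satisfy `sᵀa = s₀a₀ + ⟪s̄, ā⟫ = 0`.  Then there exists `λ ≥ 0` such that
`s = λ • a'`, where `a' = (a₀, -ā)` is the reflection of `a`. -/
theorem lorentz_orthogonal_boundary {k : ℕ} (a s : ℝ × EuclideanSpace ℝ (Fin k))
    (haK : ‖a.2‖ ≤ a.1) (ha0 : a ≠ 0) (hbd : a.1 = ‖a.2‖)
    (hs : ‖s.2‖ ≤ s.1) (hsa : s.1 * a.1 + ⟪s.2, a.2⟫ = 0) :
    ∃ lam : ℝ, 0 ≤ lam ∧ s = lam • ((a.1, -a.2) : ℝ × EuclideanSpace ℝ (Fin k)) :=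
  lorentz_orthogonal_boundary_general a s ha0 hbd hs hsa
end

section
/- Let (K, L, c) be a feasibility problem where K = K^{n_1} × … × K^{n_m} is an extended second order cone, L ⊆ ℝ^n a linear subspace, c ∈ ℝ^n. Suppose there is a nonzero a ∈ K ∩ L such that H₁(a) ∪ H₂(a) ≠ ∅, and let K̃ be the relaxed cone obtained from K and a. Then (K, L, c) is strongly feasible if and only if (K̃, L, c) is strongly feasible. -/
open scoped RealInnerProductSpace Pointwise
open Classical

noncomputable section

/-- The Lorentz (second order) cone `SOC^{k+1} = {x = (x₀, x̄) : ‖x̄‖ ≤ x₀} ⊆ ℝ^{k+1}`. -/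
def SOC (k : ℕ) : Set (EuclideanSpace ℝ (Fin (k + 1))) :=
  {x | Real.sqrt (∑ j : Fin k, x j.succ ^ 2) ≤ x 0}

/-- The reflection `x' = (x₀, -x̄)` of `x` with respect to the Lorentz cone. -/
def reflect {k : ℕ} (x : EuclideanSpace ℝ (Fin (k + 1))) : EuclideanSpace ℝ (Fin (k + 1)) :=
  WithLp.toLp 2 (fun j => if j = 0 then x 0 else - x j)

/-- The closed half-space `H_d = {x : dᵀx ≥ 0}`. -/
def halfSpace {k : ℕ} (d : EuclideanSpace ℝ (Fin (k + 1))) :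
    Set (EuclideanSpace ℝ (Fin (k + 1))) :=
  {x | 0 ≤ ⟪d, x⟫}

/-- The ray `ray_d = {α • d : α ≥ 0}`. -/
def ray {k : ℕ} (d : EuclideanSpace ℝ (Fin (k + 1))) :
    Set (EuclideanSpace ℝ (Fin (k + 1))) :=
  {x | ∃ α : ℝ, 0 ≤ α ∧ x = α • d}

/-- A block of an extended second order cone: the trivial cone `{0}`, the whole space,
the Lorentz cone, a closed half-space `H_d` with `d ∈ SOC \ {0}`, or a ray `ray_d` with
`d ∈ SOC`. -/
def IsESOCBlock {k : ℕ} (B : Set (EuclideanSpace ℝ (Fin (k + 1)))) : Prop :=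
  B = {0} ∨ B = Set.univ ∨ B = SOC k ∨
    (∃ d ∈ SOC k, d ≠ 0 ∧ B = halfSpace d) ∨ ∃ d ∈ SOC k, B = ray d

/-- The total space `ℝ^n = ℝ^{n_1} × ⋯ × ℝ^{n_m}` with the Euclidean (ℓ²) structure. -/
abbrev TS {m : ℕ} (k : Fin m → ℕ) := PiLp 2 fun i => EuclideanSpace ℝ (Fin (k i + 1))

/-- The product cone `K = K^{n_1} × ⋯ × K^{n_m}` determined by the blocks `B i`. -/
def prodSet {m : ℕ} (k : Fin m → ℕ) (B : ∀ i, Set (EuclideanSpace ℝ (Fin (k i + 1)))) :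
    Set (TS k) :=
  {x | ∀ i, x i ∈ B i}

/-- `B` describes an extended second order cone (blockwise). -/
def IsESOC {m : ℕ} (k : Fin m → ℕ) (B : ∀ i, Set (EuclideanSpace ℝ (Fin (k i + 1)))) : Prop :=
  ∀ i, IsESOCBlock (B i)

/-- `H₁(a, K) = {i : K^{n_i} = SOC^{n_i}, a_{n_i} ∈ ri SOC^{n_i}}`. -/
def H1 {m : ℕ} (k : Fin m → ℕ) (B : ∀ i, Set (EuclideanSpace ℝ (Fin (k i + 1))))
    (a : TS k) : Set (Fin m) :=
  {i | B i = SOC (k i) ∧ a i ∈ intrinsicInterior ℝ (SOC (k i))}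

/-- `H₂(a, K) = {i : K^{n_i} = SOC^{n_i}, a_{n_i} ∈ (rel bd SOC^{n_i}) \ {0}}`. -/
def H2 {m : ℕ} (k : Fin m → ℕ) (B : ∀ i, Set (EuclideanSpace ℝ (Fin (k i + 1))))
    (a : TS k) : Set (Fin m) :=
  {i | B i = SOC (k i) ∧ a i ∈ intrinsicFrontier ℝ (SOC (k i)) ∧ a i ≠ 0}

/-- The relaxed cone `K̃` obtained from `K` and `a` (blockwise): block `i` becomes the whole
space if `i ∈ H₁(a, K)`, the half-space `H_{(a_{n_i})'}` if `i ∈ H₂(a, K)`, and is unchanged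
otherwise. -/
def relaxedBlocks {m : ℕ} (k : Fin m → ℕ) (B : ∀ i, Set (EuclideanSpace ℝ (Fin (k i + 1))))
    (a : TS k) : ∀ i, Set (EuclideanSpace ℝ (Fin (k i + 1))) :=
  fun i =>
    if i ∈ H1 k B a then Set.univ
    else if i ∈ H2 k B a then halfSpace (reflect (a i))
    else B i

/-- The affine set `L + c`. -/
def affineSet {V : Type*} [AddCommGroup V] [Module ℝ V] (L : Submodule ℝ V) (c : V) :
    Set V :=
  {x | x - c ∈ L}

/-- The distance between two sets. -/
def setDist {V : Type*} [NormedAddCommGroup V] (A B : Set V) : ℝ :=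
  sInf (Set.image2 dist A B)

/-- `(K, L, c)` is strongly feasible: `(L + c) ∩ ri K ≠ ∅`. -/
def StronglyFeasible {V : Type*} [NormedAddCommGroup V] [Module ℝ V]
    (K : Set V) (L : Submodule ℝ V) (c : V) : Prop :=
  (affineSet L c ∩ intrinsicInterior ℝ K).Nonempty

/-- `(K, L, c)` is weakly feasible: `K ∩ (L + c) ≠ ∅` but `(L + c) ∩ ri K = ∅`. -/
def WeaklyFeasible {V : Type*} [NormedAddCommGroup V] [Module ℝ V]
    (K : Set V) (L : Submodule ℝ V) (c : V) : Prop :=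
  (K ∩ affineSet L c).Nonempty ∧ affineSet L c ∩ intrinsicInterior ℝ K = ∅

/-- `(K, L, c)` is weakly infeasible: `K ∩ (L + c) = ∅` but `dist(K, L + c) = 0`. -/
def WeaklyInfeasible {V : Type*} [NormedAddCommGroup V] [Module ℝ V]
    (K : Set V) (L : Submodule ℝ V) (c : V) : Prop :=
  K ∩ affineSet L c = ∅ ∧ setDist K (affineSet L c) = 0

/-- `(K, L, c)` is strongly infeasible: `K ∩ (L + c) = ∅` and `dist(K, L + c) > 0`. -/
def StronglyInfeasible {V : Type*} [NormedAddCommGroup V] [Module ℝ V]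
    (K : Set V) (L : Submodule ℝ V) (c : V) : Prop :=
  K ∩ affineSet L c = ∅ ∧ 0 < setDist K (affineSet L c)

/-- `(K, L, c)` is in weak status: weakly feasible or weakly infeasible. -/
def WeakStatus {V : Type*} [NormedAddCommGroup V] [Module ℝ V]
    (K : Set V) (L : Submodule ℝ V) (c : V) : Prop :=
  WeaklyFeasible K L c ∨ WeaklyInfeasible K L c

/-!
Relative interiors of products are products of relative interiors, so strong feasibility of both
problems is a blockwise condition on a point of `L + c`. Going from `K` to `K̃`, the only blocks
that change are Lorentz cones, and `ri SOC` lies in the open half-space `⟪a', x⟫ > 0` whenever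
`a ∈ SOC \ {0}`. Conversely, from `x ∈ (L + c) ∩ ri K̃` move along `x + t a`, which stays in
`L + c` because `a ∈ L`. For large `t` each block enters `ri K`: on `H₁(a)` because `a_i` is an
interior point of the Lorentz cone, on `H₂(a)` because
`(x₀ + t a₀)² - ‖x̄ + t ā‖² = x₀² - ‖x̄‖² + 2 t ⟪a', x⟫` when `‖ā‖ = a₀`, and on every other block
because adding an element of a convex cone to a relative interior point keeps it there.
-/

open Set Filter Topology

section IntrinsicInterior

variable {𝕜 V : Type*} [Ring 𝕜] [AddCommGroup V] [Module 𝕜 V] [TopologicalSpace V]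

theorem mem_intrinsicInterior_iff_mem_nhdsWithin {s : Set V} {x : V} :
    x ∈ intrinsicInterior 𝕜 s ↔ x ∈ s ∧ s ∈ 𝓝[affineSpan 𝕜 s] x := by
  constructor
  · rintro ⟨y, hy, rfl⟩
    exact ⟨intrinsicInterior_subset ⟨y, hy, rfl⟩,
      preimage_coe_mem_nhds_subtype.1 (mem_interior_iff_mem_nhds.1 hy)⟩
  · rintro ⟨hx, hs⟩
    exact ⟨⟨x, subset_affineSpan 𝕜 s hx⟩,
      mem_interior_iff_mem_nhds.2 (preimage_coe_mem_nhds_subtype.2 hs), rfl⟩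

theorem add_mem_intrinsicInterior [IsTopologicalAddGroup V] {s : Set V} {x a : V}
    (hx : x ∈ intrinsicInterior 𝕜 s) (ha : a ∈ vectorSpan 𝕜 s) (hs : ∀ y ∈ s, y + a ∈ s) :
    x + a ∈ intrinsicInterior 𝕜 s := by
  rw [mem_intrinsicInterior_iff_mem_nhdsWithin] at hx ⊢
  refine ⟨hs x hx.1, ?_⟩
  have hmaps : MapsTo (· - a) (affineSpan 𝕜 s : Set V) (affineSpan 𝕜 s) := fun y hy => by
    rw [← direction_affineSpan] at ha
    simpa [sub_eq_neg_add] using AffineSubspace.vadd_mem_of_mem_direction (neg_mem ha) hy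
  have htendsto : Tendsto (· - a) (𝓝[affineSpan 𝕜 s] (x + a)) (𝓝[affineSpan 𝕜 s] x) := by
    simpa using (continuous_sub_right a).continuousWithinAt.tendsto_nhdsWithin (x := x + a) hmaps
  filter_upwards [htendsto hx.2] with y hy
  simpa using hs _ hy

theorem PointedCone.add_mem_intrinsicInterior [PartialOrder 𝕜] [IsOrderedRing 𝕜]
    [IsTopologicalAddGroup V] {C : PointedCone 𝕜 V} {x a : V}
    (hx : x ∈ intrinsicInterior 𝕜 (C : Set V)) (ha : a ∈ C) :
    x + a ∈ intrinsicInterior 𝕜 (C : Set V) :=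
  _root_.add_mem_intrinsicInterior hx (by simpa using vsub_mem_vectorSpan 𝕜 ha C.zero_mem)
    fun _ hy => C.add_mem hy ha

variable {ι : Type*} {E : ι → Type*} [∀ i, AddCommGroup (E i)] [∀ i, Module 𝕜 (E i)]
  [∀ i, TopologicalSpace (E i)] {s : ∀ i, Set (E i)}

theorem intrinsicInterior_pi_subset :
    intrinsicInterior 𝕜 (univ.pi s) ⊆ univ.pi fun i => intrinsicInterior 𝕜 (s i) := by
  intro x hx i _
  rw [mem_intrinsicInterior_iff_mem_nhdsWithin, mem_univ_pi] at hx
  obtain ⟨hx, hpi⟩ := hx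
  let u : E i →ᵃ[𝕜] ∀ j, E j := AffineMap.pi
    (Function.update (fun j => AffineMap.const 𝕜 (E i) (x j)) i (AffineMap.id 𝕜 (E i)))
  have hu : ∀ v, u v = Function.update x i v := fun v => by
    ext j
    rcases eq_or_ne j i with rfl | hj
    · simp [u]
    · simp [u, hj]
  have hsu : s i ⊆ u ⁻¹' univ.pi s := fun v hv => by
    rw [mem_preimage, hu, mem_univ_pi]
    intro j
    rcases eq_or_ne j i with rfl | hj
    · simpa using hv
    · simpa [hj] using hx j
  have hmaps : MapsTo u (affineSpan 𝕜 (s i)) (affineSpan 𝕜 (univ.pi s)) := fun _ hv =>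
    (affineSpan_le.2 (hsu.trans (preimage_mono (subset_affineSpan 𝕜 _))) :
      affineSpan 𝕜 (s i) ≤ (affineSpan 𝕜 (univ.pi s)).comap u) hv
  have hcont : Continuous u := by
    simp_rw [funext hu]
    exact continuous_const.update i continuous_id
  have htendsto : Tendsto u (𝓝[affineSpan 𝕜 (s i)] (x i)) (𝓝[affineSpan 𝕜 (univ.pi s)] x) := by
    simpa [hu] using hcont.continuousWithinAt.tendsto_nhdsWithin (x := x i) hmaps
  refine mem_intrinsicInterior_iff_mem_nhdsWithin.2 ⟨hx i, ?_⟩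
  filter_upwards [htendsto hpi] with v hv
  simpa [hu] using hv i

theorem pi_intrinsicInterior_subset [Finite ι] :
    (univ.pi fun i => intrinsicInterior 𝕜 (s i)) ⊆ intrinsicInterior 𝕜 (univ.pi s) := by
  intro x hx
  simp only [mem_univ_pi, mem_intrinsicInterior_iff_mem_nhdsWithin] at hx
  have hproj : ∀ i, Tendsto (fun y : ∀ j, E j => y i) (𝓝[affineSpan 𝕜 (univ.pi s)] x)
      (𝓝[affineSpan 𝕜 (s i)] (x i)) := fun i =>
    (continuous_apply i).continuousWithinAt.tendsto_nhdsWithin fun _ hy =>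
      (affineSpan_le.2 (fun z hz => subset_affineSpan 𝕜 (s i) (hz i trivial)) :
        affineSpan 𝕜 (univ.pi s) ≤ (affineSpan 𝕜 (s i)).comap (AffineMap.proj i)) hy
  refine mem_intrinsicInterior_iff_mem_nhdsWithin.2 ⟨fun i _ => (hx i).1, ?_⟩
  filter_upwards [eventually_all.2 fun i => hproj i (hx i).2] with y hy
  exact fun i _ => hy i

theorem intrinsicInterior_pi [Finite ι] (s : ∀ i, Set (E i)) :
    intrinsicInterior 𝕜 (univ.pi s) = univ.pi fun i => intrinsicInterior 𝕜 (s i) :=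
  intrinsicInterior_pi_subset.antisymm pi_intrinsicInterior_subset

end IntrinsicInterior

section Normed

variable {V : Type*} [NormedAddCommGroup V] [NormedSpace ℝ V]

theorem intrinsicInterior_eq_interior {s : Set V} (hs : (interior s).Nonempty) :
    intrinsicInterior ℝ s = interior s := by
  have hspan : affineSpan ℝ s = ⊤ :=
    affineSpan_eq_top_of_nonempty_interior (hs.mono (interior_mono (subset_convexHull ℝ s)))
  ext x
  rw [mem_intrinsicInterior_iff_mem_nhdsWithin, hspan, AffineSubspace.top_coe, nhdsWithin_univ,
    mem_interior_iff_mem_nhds]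
  exact ⟨And.right, fun h => ⟨mem_of_mem_nhds h, h⟩⟩

theorem intrinsicInterior_univ : intrinsicInterior ℝ (univ : Set V) = univ := by
  rw [intrinsicInterior_eq_interior (by simp), interior_univ]

theorem exists_pos_sub_smul_mem_of_mem_interior {s : Set V} {x : V} (hx : x ∈ interior s)
    (v : V) : ∃ ε > (0 : ℝ), x - ε • v ∈ s := by
  have hlim : Tendsto (fun ε : ℝ => x - ε • v) (𝓝[>] 0) (𝓝 x) := by
    have hcont : Continuous fun ε : ℝ => x - ε • v := by fun_prop
    simpa using (hcont.tendsto 0).mono_left nhdsWithin_le_nhds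
  obtain ⟨ε, hεs, hε⟩ :=
    ((hlim.eventually (mem_interior_iff_mem_nhds.1 hx)).and self_mem_nhdsWithin).exists
  exact ⟨ε, hε, hεs⟩

end Normed

theorem intrinsicInterior_prodSet {m : ℕ} (k : Fin m → ℕ)
    (B : ∀ i, Set (EuclideanSpace ℝ (Fin (k i + 1)))) :
    intrinsicInterior ℝ (prodSet k B) = prodSet k fun i => intrinsicInterior ℝ (B i) := by
  let φ := (PiLp.continuousLinearEquiv 2 ℝ fun i =>
    EuclideanSpace ℝ (Fin (k i + 1))).toContinuousAffineEquiv
  have hφ : ∀ s, prodSet k s = φ.symm '' univ.pi s := fun s => by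
    rw [φ.image_symm]
    ext x
    simp [prodSet, φ]
  rw [hφ, hφ, φ.symm.intrinsicInterior_image, intrinsicInterior_pi]

namespace SOC

variable {k : ℕ}

/-- The part `x̄` of `x = (x₀, x̄)`. -/
def tail : EuclideanSpace ℝ (Fin (k + 1)) →ₗ[ℝ] EuclideanSpace ℝ (Fin k) where
  toFun x := WithLp.toLp 2 fun j => x j.succ
  map_add' _ _ := rfl
  map_smul' _ _ := rfl

@[simp]
theorem tail_apply (x : EuclideanSpace ℝ (Fin (k + 1))) (j : Fin k) : tail x j = x j.succ := rfl

theorem mem_iff {x : EuclideanSpace ℝ (Fin (k + 1))} : x ∈ SOC k ↔ ‖tail x‖ ≤ x 0 := by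
  simp [SOC, EuclideanSpace.norm_eq]

theorem isClosed : IsClosed (SOC k) := by
  have : SOC k = {x | ‖tail x‖ ≤ x 0} := Set.ext fun _ => mem_iff
  rw [this]
  exact isClosed_le (by fun_prop) (by fun_prop)

theorem inner_reflect (a x : EuclideanSpace ℝ (Fin (k + 1))) :
    ⟪reflect a, x⟫ = a 0 * x 0 - ⟪tail a, tail x⟫ := by
  simp [reflect, PiLp.inner_apply, Fin.sum_univ_succ, Fin.succ_ne_zero, mul_comm, sub_eq_add_neg]

theorem head_pos {a : EuclideanSpace ℝ (Fin (k + 1))} (ha : a ∈ SOC k) (ha0 : a ≠ 0) :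
    0 < a 0 := by
  refine (norm_nonneg _ |>.trans (mem_iff.1 ha)).lt_of_ne fun h0 => ha0 ?_
  have htail : tail a = 0 := norm_le_zero_iff.1 (h0 ▸ mem_iff.1 ha)
  ext j
  refine Fin.cases h0.symm (fun j => ?_) j
  simpa using congrArg (· j) htail

@[simp]
theorem tail_single_zero : tail (EuclideanSpace.single (0 : Fin (k + 1)) (1 : ℝ)) = 0 := by
  ext j; simp [Fin.succ_ne_zero]

def pointedCone (k : ℕ) : PointedCone ℝ (EuclideanSpace ℝ (Fin (k + 1))) where
  carrier := SOC k
  add_mem' {x y} hx hy := by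
    rw [mem_iff] at hx hy ⊢
    grw [map_add, norm_add_le, hx, hy]
    rfl
  zero_mem' := by simp [mem_iff]
  smul_mem' := fun ⟨c, hc⟩ x hx => by
    rw [mem_iff] at hx ⊢
    simpa [Nonneg.mk_smul, norm_smul, abs_of_nonneg hc] using mul_le_mul_of_nonneg_left hx hc

theorem interior_eq : interior (SOC k) = {x | ‖tail x‖ < x 0} := by
  refine Subset.antisymm (fun x hx => ?_)
    (interior_maximal (fun x hx => mem_iff.2 (le_of_lt hx))
      (isOpen_lt (by fun_prop) (by fun_prop)))
  obtain ⟨ε, hε, hxε⟩ := exists_pos_sub_smul_mem_of_mem_interior hx (EuclideanSpace.single 0 1)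
  have hxε : ‖tail x‖ ≤ x 0 - ε := by simpa using mem_iff.1 hxε
  show ‖tail x‖ < x 0
  linarith

theorem intrinsicInterior_eq : intrinsicInterior ℝ (SOC k) = {x | ‖tail x‖ < x 0} := by
  rw [intrinsicInterior_eq_interior ⟨EuclideanSpace.single 0 1, by rw [interior_eq]; simp⟩,
    interior_eq]

theorem norm_tail_eq_of_mem_intrinsicFrontier {a : EuclideanSpace ℝ (Fin (k + 1))}
    (ha : a ∈ intrinsicFrontier ℝ (SOC k)) : ‖tail a‖ = a 0 := by
  have hmem : a ∈ SOC k := intrinsicFrontier_subset isClosed ha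
  rw [← intrinsicClosure_sdiff_intrinsicInterior, intrinsicInterior_eq] at ha
  exact le_antisymm (mem_iff.1 hmem) (not_lt.1 ha.2)

theorem inner_reflect_pos {a x : EuclideanSpace ℝ (Fin (k + 1))} (ha : a ∈ SOC k) (ha0 : a ≠ 0)
    (hx : x ∈ intrinsicInterior ℝ (SOC k)) : 0 < ⟪reflect a, x⟫ := by
  rw [intrinsicInterior_eq] at hx
  have hx : ‖tail x‖ < x 0 := hx
  rw [inner_reflect]
  nlinarith [real_inner_le_norm (tail a) (tail x), norm_nonneg (tail x), mem_iff.1 ha,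
    mul_pos (head_pos ha ha0) (sub_pos.2 hx)]

theorem eventually_add_smul_mem_intrinsicInterior {a : EuclideanSpace ℝ (Fin (k + 1))}
    (ha : a ∈ intrinsicInterior ℝ (SOC k)) (x : EuclideanSpace ℝ (Fin (k + 1))) :
    ∀ᶠ t : ℝ in atTop, x + t • a ∈ intrinsicInterior ℝ (SOC k) := by
  rw [intrinsicInterior_eq] at ha ⊢
  have ha : ‖tail a‖ < a 0 := ha
  filter_upwards [eventually_ge_atTop (0 : ℝ),
    eventually_gt_atTop ((‖tail x‖ - x 0) / (a 0 - ‖tail a‖))] with t ht0 ht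
  have := (div_lt_iff₀ (sub_pos.2 ha)).1 ht
  calc ‖tail (x + t • a)‖ = ‖tail x + t • tail a‖ := by simp
    _ ≤ ‖tail x‖ + t * ‖tail a‖ := by
      grw [norm_add_le, norm_smul, Real.norm_of_nonneg ht0]
    _ < x 0 + t * a 0 := by linarith
    _ = (x + t • a) 0 := by simp

theorem eventually_add_smul_mem_intrinsicInterior_of_norm_tail_eq
    {a x : EuclideanSpace ℝ (Fin (k + 1))} (ha : ‖tail a‖ = a 0) (hx : 0 < ⟪reflect a, x⟫) :
    ∀ᶠ t : ℝ in atTop, x + t • a ∈ intrinsicInterior ℝ (SOC k) := by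
  rw [intrinsicInterior_eq]
  rw [inner_reflect] at hx
  have ha0 : 0 < a 0 := by
    refine (ha ▸ norm_nonneg _).lt_of_ne fun h0 => hx.ne' ?_
    rw [← h0, norm_eq_zero] at ha
    simp [ha, ← h0]
  filter_upwards [eventually_gt_atTop (-x 0 / a 0 : ℝ),
    eventually_gt_atTop ((‖tail x‖ ^ 2 - x 0 ^ 2) / (2 * (a 0 * x 0 - ⟪tail a, tail x⟫)))]
    with t ht₁ ht₂
  have hhead : 0 < x 0 + t * a 0 := by
    have := (div_lt_iff₀ ha0).1 ht₁; linarith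
  have hsq : ‖tail x + t • tail a‖ ^ 2 < (x 0 + t * a 0) ^ 2 := by
    have := (div_lt_iff₀ (by linarith)).1 ht₂
    rw [norm_add_sq_real, norm_smul, real_inner_smul_right, mul_pow, Real.norm_eq_abs, sq_abs, ha,
      real_inner_comm]
    nlinarith
  show ‖tail (x + t • a)‖ < (x + t • a) 0
  simpa using lt_of_pow_lt_pow_left₀ 2 hhead.le hsq

end SOC

theorem reflect_ne_zero {k : ℕ} {a : EuclideanSpace ℝ (Fin (k + 1))} (ha : a ≠ 0) :
    reflect a ≠ 0 := by
  intro h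
  apply ha
  ext j
  have hj := congrArg (fun v : EuclideanSpace ℝ (Fin (k + 1)) => v j) h
  by_cases hj0 : j = 0
  · subst hj0
    simpa [reflect] using hj
  · simpa [reflect, hj0] using hj

theorem intrinsicInterior_halfSpace {k : ℕ} {d : EuclideanSpace ℝ (Fin (k + 1))} (hd : d ≠ 0) :
    intrinsicInterior ℝ (halfSpace d) = {x | 0 < ⟪d, x⟫} := by
  have hint : interior (halfSpace d) = {x | 0 < ⟪d, x⟫} := by
    refine Subset.antisymm (fun x hx => ?_)
      (interior_maximal (fun x (hx : 0 < ⟪d, x⟫) => (hx.le : 0 ≤ ⟪d, x⟫))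
        (isOpen_lt continuous_const (by fun_prop)))
    obtain ⟨ε, hε, hxε⟩ := exists_pos_sub_smul_mem_of_mem_interior hx d
    have hxε : 0 ≤ ⟪d, x⟫ - ε * ‖d‖ ^ 2 := by
      simpa [halfSpace, inner_sub_right, real_inner_smul_right] using hxε
    have : 0 < ε * ‖d‖ ^ 2 := by positivity
    show 0 < ⟪d, x⟫
    linarith
  rw [intrinsicInterior_eq_interior
    ⟨d, by rw [hint]; simpa using pow_pos (norm_pos_iff.2 hd) 2⟩, hint]

theorem IsESOCBlock.exists_pointedCone {k : ℕ} {B : Set (EuclideanSpace ℝ (Fin (k + 1)))}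
    (hB : IsESOCBlock B) :
    ∃ C : PointedCone ℝ (EuclideanSpace ℝ (Fin (k + 1))), (C : Set _) = B := by
  rcases hB with rfl | rfl | rfl | ⟨d, -, -, rfl⟩ | ⟨d, -, rfl⟩
  · exact ⟨⊥, Submodule.bot_coe⟩
  · exact ⟨⊤, Submodule.top_coe⟩
  · exact ⟨SOC.pointedCone k, rfl⟩
  · exact ⟨(ProperCone.innerDual {d}).toSubmodule, by ext; simp [halfSpace]⟩
  · refine ⟨PointedCone.hull ℝ {d}, ?_⟩
    ext x
    simp [ray, Submodule.mem_span_singleton, Nonneg.mk_smul, eq_comm]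

section Relaxation

variable {m : ℕ} {k : Fin m → ℕ} {B : ∀ i, Set (EuclideanSpace ℝ (Fin (k i + 1)))} {a : TS k}

theorem intrinsicInterior_subset_relaxedBlocks (haK : a ∈ prodSet k B) (i : Fin m) :
    intrinsicInterior ℝ (B i) ⊆ intrinsicInterior ℝ (relaxedBlocks k B a i) := by
  unfold relaxedBlocks
  split_ifs with h₁ h₂
  · simp [intrinsicInterior_univ]
  · obtain ⟨hBi, -, ha0⟩ := h₂
    have haSOC : a i ∈ SOC (k i) := hBi ▸ haK i
    rw [hBi, intrinsicInterior_halfSpace (reflect_ne_zero ha0)]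
    exact fun x hx => SOC.inner_reflect_pos haSOC ha0 hx
  · exact subset_rfl

theorem eventually_add_smul_mem_intrinsicInterior_of_mem_relaxedBlocks (hB : IsESOC k B)
    (haK : a ∈ prodSet k B) {i : Fin m} {x : EuclideanSpace ℝ (Fin (k i + 1))}
    (hx : x ∈ intrinsicInterior ℝ (relaxedBlocks k B a i)) :
    ∀ᶠ t : ℝ in atTop, x + t • a i ∈ intrinsicInterior ℝ (B i) := by
  unfold relaxedBlocks at hx
  split_ifs at hx with h₁ h₂
  · rw [h₁.1]
    exact SOC.eventually_add_smul_mem_intrinsicInterior h₁.2 x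
  · obtain ⟨hBi, hfr, ha0⟩ := h₂
    rw [intrinsicInterior_halfSpace (reflect_ne_zero ha0)] at hx
    rw [hBi]
    exact SOC.eventually_add_smul_mem_intrinsicInterior_of_norm_tail_eq
      (SOC.norm_tail_eq_of_mem_intrinsicFrontier hfr) hx
  · obtain ⟨C, hC⟩ := (hB i).exists_pointedCone
    filter_upwards [eventually_ge_atTop 0] with t ht
    rw [← hC] at hx ⊢
    have ha : a i ∈ C := by rw [← SetLike.mem_coe, hC]; exact haK i
    exact C.add_mem_intrinsicInterior hx (C.smul_mem ht ha)

end Relaxation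

theorem relaxation_strongly_feasible_iff_general {m : ℕ} (k : Fin m → ℕ)
    (B : ∀ i, Set (EuclideanSpace ℝ (Fin (k i + 1)))) (hB : IsESOC k B)
    (L : Submodule ℝ (TS k)) (c : TS k) (a : TS k)
    (haK : a ∈ prodSet k B) (haL : a ∈ L) :
    StronglyFeasible (prodSet k B) L c ↔
      StronglyFeasible (prodSet k (relaxedBlocks k B a)) L c := by
  simp only [StronglyFeasible, intrinsicInterior_prodSet]
  constructor
  · rintro ⟨x, hxL, hx⟩
    exact ⟨x, hxL, fun i => intrinsicInterior_subset_relaxedBlocks haK i (hx i)⟩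
  · rintro ⟨x, hxL, hx⟩
    obtain ⟨t, ht⟩ := (eventually_all.2 fun i =>
      eventually_add_smul_mem_intrinsicInterior_of_mem_relaxedBlocks hB haK (hx i)).exists
    refine ⟨x + t • a, ?_, ht⟩
    show x + t • a - c ∈ L
    rw [add_sub_right_comm]
    exact L.add_mem hxL (L.smul_mem t haL)

/-- **Theorem 1(i).** Let `(K, L, c)` be a feasibility problem where
`K = K^{n_1} × ⋯ × K^{n_m}` is an extended second order cone, `L` a linear subspace and
`c` a point.  Suppose there is a nonzero `a ∈ K ∩ L` with `H₁(a) ∪ H₂(a) ≠ ∅` and let `K̃`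
be the relaxed cone obtained from `K` and `a`.  Then `(K, L, c)` is strongly feasible if and
only if `(K̃, L, c)` is strongly feasible. -/
theorem relaxation_strongly_feasible_iff {m : ℕ} (k : Fin m → ℕ)
    (B : ∀ i, Set (EuclideanSpace ℝ (Fin (k i + 1)))) (hB : IsESOC k B)
    (L : Submodule ℝ (TS k)) (c : TS k) (a : TS k)
    (haK : a ∈ prodSet k B) (haL : a ∈ L) (ha0 : a ≠ 0)
    (hH : (H1 k B a ∪ H2 k B a).Nonempty) :
    StronglyFeasible (prodSet k B) L c ↔
      StronglyFeasible (prodSet k (relaxedBlocks k B a)) L c :=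
  relaxation_strongly_feasible_iff_general k B hB L c a haK haL

end
end

section
/- Let (K, L, c) be a feasibility problem where K = K^{n_1} × … × K^{n_m} is an extended second order cone, L ⊆ ℝ^n a linear subspace, c ∈ ℝ^n. Suppose there is a nonzero a ∈ K ∩ L such that H₁(a) ∪ H₂(a) ≠ ∅, and let K̃ be the relaxed cone obtained from K and a. Then (K, L, c) is strongly infeasible if and only if (K̃, L, c) is strongly infeasible. -/
open scoped RealInnerProductSpace Pointwise
open Classical

noncomputable section

/-!
Since `a ∈ L`, the affine set `L + c` is invariant under translation along `ℝ a`, so `K` and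
`cl (K + ℝ a)` are at the same distance from it; strong infeasibility says exactly that this
distance is positive. It therefore suffices that `K ⊆ K̃ ⊆ cl (K + ℝ a)`. For `x ∈ K̃`, the point
`x + t a` approaches `K` blockwise as `t → ∞`: on a block of `H₁(a)` it enters `SOC` because
`aᵢ` is interior; on a block of `H₂(a)` the condition `⟪aᵢ', xᵢ⟫ ≥ 0` keeps it within `O(1/t)`
of `SOC`; every other block is a convex cone containing `aᵢ`.
-/

open Filter Topology

section SetDist

variable {V : Type*} [NormedAddCommGroup V]

lemma setDist_le_dist {A B : Set V} {x y : V} (hx : x ∈ A) (hy : y ∈ B) :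
    setDist A B ≤ dist x y :=
  csInf_le ⟨0, by rintro _ ⟨_, -, _, -, rfl⟩; exact dist_nonneg⟩ ⟨x, hx, y, hy, rfl⟩

lemma setDist_le_setDist_of_subset_left {A A' B : Set V} (hA : A.Nonempty) (hB : B.Nonempty)
    (h : A ⊆ A') : setDist A' B ≤ setDist A B :=
  le_csInf (hA.image2 hB) <| by
    rintro _ ⟨x, hx, y, hy, rfl⟩
    exact setDist_le_dist (h hx) hy

/-- As `A - D ⊆ A`, the set `K + D` is no closer to `A` than `K`, and neither is its closure. -/
lemma setDist_le_dist_of_mem_closure_add {K A D : Set V} (hA : ∀ y ∈ A, ∀ v ∈ D, y - v ∈ A)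
    {x y : V} (hx : x ∈ closure (K + D)) (hy : y ∈ A) : setDist K A ≤ dist x y := by
  refine le_of_forall_pos_lt_add fun ε hε => ?_
  obtain ⟨_, ⟨z, hz, v, hv, rfl⟩, hxzv⟩ := Metric.mem_closure_iff.1 hx ε hε
  rw [add_comm]
  calc setDist K A ≤ dist z (y - v) := setDist_le_dist hz (hA y hy v hv)
    _ = dist (z + v) y := by rw [dist_sub_eq_dist_add_right]
    _ ≤ dist x (z + v) + dist x y := dist_triangle_left _ _ _
    _ < ε + dist x y := by gcongr

lemma setDist_eq_of_subset_closure_add {K K' A D : Set V} (hK : K.Nonempty) (hA : A.Nonempty)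
    (hKK' : K ⊆ K') (hK' : K' ⊆ closure (K + D)) (hAD : ∀ y ∈ A, ∀ v ∈ D, y - v ∈ A) :
    setDist K' A = setDist K A :=
  (setDist_le_setDist_of_subset_left hK hA hKK').antisymm <|
    le_csInf ((hK.mono hKK').image2 hA) <| by
      rintro _ ⟨x, hx, y, hy, rfl⟩
      exact setDist_le_dist_of_mem_closure_add hAD (hK' hx) hy

lemma stronglyInfeasible_iff_setDist_pos [Module ℝ V] {K : Set V} {L : Submodule ℝ V} {c : V} :
    StronglyInfeasible K L c ↔ 0 < setDist K (affineSet L c) :=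
  ⟨And.right, fun h => ⟨Set.eq_empty_iff_forall_notMem.2 fun x hx =>
    (setDist_le_dist hx.1 hx.2).not_gt (by rwa [dist_self]), h⟩⟩

end SetDist

lemma mem_affineSet_self {V : Type*} [AddCommGroup V] [Module ℝ V] (L : Submodule ℝ V) (c : V) :
    c ∈ affineSet L c := by
  simp [affineSet]

lemma sub_mem_affineSet {V : Type*} [AddCommGroup V] [Module ℝ V] {L : Submodule ℝ V} {c y v : V}
    (hy : y ∈ affineSet L c) (hv : v ∈ L) : y - v ∈ affineSet L c := by
  change y - v - c ∈ L
  rw [sub_right_comm]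
  exact L.sub_mem hy hv

lemma mem_closure_add_span_of_tendsto {V : Type*} [AddCommGroup V] [Module ℝ V]
    [TopologicalSpace V] {K : Set V} {a x : V} {z : ℝ → V} (hz : ∀ᶠ t in atTop, z t ∈ K)
    (hlim : Tendsto (fun t => z t - t • a) atTop (𝓝 x)) :
    x ∈ closure (K + (ℝ ∙ a : Set V)) :=
  mem_closure_of_tendsto hlim <| hz.mono fun t ht => sub_eq_add_neg (z t) (t • a) ▸
    Set.add_mem_add ht (neg_mem (Submodule.smul_mem _ t (Submodule.mem_span_singleton_self a)))

lemma PiLp.exists_tendsto_sub_smul {p : ENNReal} {ι : Type*} [Fintype ι] {E : ι → Type*}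
    [∀ i, NormedAddCommGroup (E i)] [∀ i, NormedSpace ℝ (E i)] {B : ∀ i, Set (E i)}
    {a x : PiLp p E}
    (h : ∀ i, ∃ z : ℝ → E i,
      (∀ᶠ t in atTop, z t ∈ B i) ∧ Tendsto (fun t => z t - t • a i) atTop (𝓝 (x i))) :
    ∃ z : ℝ → PiLp p E,
      (∀ᶠ t in atTop, ∀ i, z t i ∈ B i) ∧ Tendsto (fun t => z t - t • a) atTop (𝓝 x) := by
  choose z hzB hzlim using h
  refine ⟨fun t => WithLp.toLp p fun i => z i t, eventually_all.2 hzB, ?_⟩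
  have hlim := ((PiLp.continuous_toLp p E).tendsto _).comp (tendsto_pi_nhds.2 hzlim)
  exact hlim.congr fun t => by ext i; simp

lemma intrinsicInterior_subset_interior {V : Type*} [NormedAddCommGroup V] [NormedSpace ℝ V]
    {s : Set V} (h : affineSpan ℝ s = ⊤) : intrinsicInterior ℝ s ⊆ interior s := by
  rintro x ⟨y, hy, rfl⟩
  rw [mem_interior_iff_mem_nhds, Metric.mem_nhds_iff] at hy ⊢
  obtain ⟨ε, hε, hball⟩ := hy
  exact ⟨ε, hε, fun v hv => @hball ⟨v, h ▸ AffineSubspace.mem_top ℝ V v⟩ hv⟩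

section LorentzCone

variable {k : ℕ}

/-- The component `x̄` of `x = (x₀, x̄)`. -/
def tail (x : EuclideanSpace ℝ (Fin (k + 1))) : EuclideanSpace ℝ (Fin k) :=
  WithLp.toLp 2 fun j => x j.succ

@[simp] lemma tail_add (x y : EuclideanSpace ℝ (Fin (k + 1))) : tail (x + y) = tail x + tail y :=
  rfl

@[simp] lemma tail_smul (t : ℝ) (x : EuclideanSpace ℝ (Fin (k + 1))) :
    tail (t • x) = t • tail x :=
  rfl

@[simp] lemma tail_single_zero (r : ℝ) :
    tail (EuclideanSpace.single (0 : Fin (k + 1)) r) = 0 := by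
  ext j
  simp [tail, Fin.succ_ne_zero]

lemma continuous_tail : Continuous (tail (k := k)) :=
  PiLp.continuous_toLp 2 _ |>.comp <| continuous_pi fun j => PiLp.continuous_apply 2 _ j.succ

lemma mem_SOC_iff {x : EuclideanSpace ℝ (Fin (k + 1))} : x ∈ SOC k ↔ ‖tail x‖ ≤ x 0 := by
  simp [SOC, tail, EuclideanSpace.norm_eq]

lemma pos_head_of_mem_SOC {a : EuclideanSpace ℝ (Fin (k + 1))} (ha : a ∈ SOC k) (ha0 : a ≠ 0) :
    0 < a 0 := by
  rw [mem_SOC_iff] at ha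
  refine (norm_nonneg _ |>.trans ha).lt_of_ne fun h0 => ha0 ?_
  have htail : tail a = 0 := norm_le_zero_iff.1 (h0 ▸ ha)
  ext j
  refine Fin.cases h0.symm (fun j => ?_) j
  simpa [tail] using congrArg (· j) htail

lemma add_smul_mem_SOC {x y : EuclideanSpace ℝ (Fin (k + 1))} (hx : x ∈ SOC k) (hy : y ∈ SOC k)
    {t : ℝ} (ht : 0 ≤ t) : x + t • y ∈ SOC k := by
  rw [mem_SOC_iff] at hx hy ⊢
  calc ‖tail (x + t • y)‖ ≤ ‖tail x‖ + t * ‖tail y‖ := by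
        simpa [norm_smul, abs_of_nonneg ht] using norm_add_le (tail x) (t • tail y)
    _ ≤ x 0 + t * y 0 := by gcongr
    _ = (x + t • y) 0 := by simp

lemma norm_tail_lt_of_mem_interior_SOC {a : EuclideanSpace ℝ (Fin (k + 1))}
    (ha : a ∈ interior (SOC k)) : ‖tail a‖ < a 0 := by
  obtain ⟨ε, hε, hball⟩ := Metric.mem_nhds_iff.1 (mem_interior_iff_mem_nhds.1 ha)
  have hmem : a - (ε / 2) • EuclideanSpace.single 0 1 ∈ SOC k := by
    refine hball ?_
    simp [norm_smul, abs_of_pos hε, hε]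
  rw [mem_SOC_iff] at hmem
  simp only [sub_eq_add_neg, ← neg_smul, tail_add, tail_smul, tail_single_zero, smul_zero,
    add_zero, PiLp.add_apply, PiLp.smul_apply, PiLp.single_eq_same, smul_eq_mul, mul_one,
    le_add_neg_iff_add_le] at hmem
  linarith

lemma mem_interior_SOC_of_norm_tail_lt {a : EuclideanSpace ℝ (Fin (k + 1))}
    (ha : ‖tail a‖ < a 0) : a ∈ interior (SOC k) :=
  interior_maximal (fun _ hx => mem_SOC_iff.2 (le_of_lt hx))
    (isOpen_lt (continuous_norm.comp continuous_tail) (PiLp.continuous_apply 2 _ 0)) ha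

lemma affineSpan_SOC : affineSpan ℝ (SOC k) = ⊤ :=
  affineSpan_eq_top_of_nonempty_interior ⟨EuclideanSpace.single 0 1,
    interior_mono (subset_convexHull ℝ _) (mem_interior_SOC_of_norm_tail_lt (by simp))⟩

lemma inner_reflect (a x : EuclideanSpace ℝ (Fin (k + 1))) :
    ⟪reflect a, x⟫ = a 0 * x 0 - ⟪tail a, tail x⟫ := by
  simp [reflect, tail, PiLp.inner_apply, Fin.sum_univ_succ, Fin.succ_ne_zero, mul_comm,
    sub_eq_add_neg]

lemma SOC_subset_halfSpace_reflect {a : EuclideanSpace ℝ (Fin (k + 1))} (ha : a ∈ SOC k) :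
    SOC k ⊆ halfSpace (reflect a) := by
  intro x hx
  rw [mem_SOC_iff] at ha hx
  have : ⟪tail a, tail x⟫ ≤ a 0 * x 0 :=
    (real_inner_le_norm _ _).trans (mul_le_mul ha hx (norm_nonneg _) ((norm_nonneg _).trans ha))
  show 0 ≤ ⟪reflect a, x⟫
  rw [inner_reflect]
  linarith

lemma eventually_add_smul_mem_SOC {a : EuclideanSpace ℝ (Fin (k + 1))} (ha : ‖tail a‖ < a 0)
    (x : EuclideanSpace ℝ (Fin (k + 1))) : ∀ᶠ t : ℝ in atTop, x + t • a ∈ SOC k := by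
  have hgrow : Tendsto (fun t : ℝ => t * (a 0 - ‖tail a‖)) atTop atTop :=
    tendsto_id.atTop_mul_const (sub_pos.2 ha)
  filter_upwards [eventually_ge_atTop 0, hgrow.eventually_ge_atTop (‖tail x‖ - x 0)]
    with t ht hlarge
  rw [mem_SOC_iff]
  calc ‖tail (x + t • a)‖ ≤ ‖tail x‖ + t * ‖tail a‖ := by
        simpa [norm_smul, abs_of_nonneg ht] using norm_add_le (tail x) (t • tail a)
    _ ≤ x 0 + t * a 0 := by linarith
    _ = (x + t • a) 0 := by simp

/-- With `u = x₀ + t a₀`, the shift `s = ‖x̄‖² / (2u)` gives `(u + s)² ≥ u² + ‖x̄‖²`, which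
dominates `‖x̄ + t ā‖²` because `x ∈ H_{a'}`. -/
lemma add_smul_add_mem_SOC {a x : EuclideanSpace ℝ (Fin (k + 1))} (ha : a ∈ SOC k)
    (hx : x ∈ halfSpace (reflect a)) {t : ℝ} (ht : 0 ≤ t) (hu : 0 < x 0 + t * a 0) :
    x + t • a + (‖tail x‖ ^ 2 / (2 * (x 0 + t * a 0))) • EuclideanSpace.single 0 1 ∈ SOC k := by
  set u := x 0 + t * a 0
  set s := ‖tail x‖ ^ 2 / (2 * u)
  rw [mem_SOC_iff] at ha ⊢
  have hinner : ⟪tail x, tail a⟫ ≤ a 0 * x 0 := by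
    have : 0 ≤ ⟪reflect a, x⟫ := hx
    rw [inner_reflect, real_inner_comm] at this
    linarith
  have hus : 2 * u * s = ‖tail x‖ ^ 2 := by
    simp only [s]; field_simp
  have hsq : ‖tail x + t • tail a‖ ^ 2 ≤ (u + s) ^ 2 :=
    calc ‖tail x + t • tail a‖ ^ 2
        = ‖tail x‖ ^ 2 + 2 * t * ⟪tail x, tail a⟫ + t ^ 2 * ‖tail a‖ ^ 2 := by
          rw [norm_add_sq_real, real_inner_smul_right, norm_smul, Real.norm_of_nonneg ht]
          ring
      _ ≤ ‖tail x‖ ^ 2 + 2 * t * (a 0 * x 0) + t ^ 2 * a 0 ^ 2 := by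
          gcongr
      _ ≤ (u + s) ^ 2 := by nlinarith [sq_nonneg s, sq_nonneg (x 0)]
  simpa using abs_le_of_sq_le_sq' hsq (by positivity) |>.2

lemma exists_tendsto_of_mem_halfSpace_reflect {a x : EuclideanSpace ℝ (Fin (k + 1))}
    (ha : a ∈ SOC k) (ha0 : a ≠ 0) (hx : x ∈ halfSpace (reflect a)) :
    ∃ z : ℝ → EuclideanSpace ℝ (Fin (k + 1)),
      (∀ᶠ t in atTop, z t ∈ SOC k) ∧ Tendsto (fun t => z t - t • a) atTop (𝓝 x) := by
  have hu : Tendsto (fun t => x 0 + t * a 0) atTop atTop :=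
    tendsto_atTop_add_const_left _ _ (tendsto_id.atTop_mul_const (pos_head_of_mem_SOC ha ha0))
  refine ⟨fun t => x + t • a +
    (‖tail x‖ ^ 2 / (2 * (x 0 + t * a 0))) • EuclideanSpace.single 0 1, ?_, ?_⟩
  · filter_upwards [eventually_ge_atTop 0, hu.eventually_gt_atTop 0] with t ht htu
    exact add_smul_add_mem_SOC ha hx ht htu
  · have hs : Tendsto (fun t => ‖tail x‖ ^ 2 / (2 * (x 0 + t * a 0))) atTop (𝓝 0) :=
      tendsto_const_nhds.div_atTop (hu.const_mul_atTop two_pos)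
    have hlim := (tendsto_const_nhds (x := x)).add
      (hs.smul_const (EuclideanSpace.single (0 : Fin (k + 1)) (1 : ℝ)))
    rw [zero_smul, add_zero] at hlim
    exact hlim.congr fun t => by dsimp only; rw [add_right_comm, add_sub_cancel_right]

end LorentzCone

lemma IsESOCBlock.add_smul_mem {k : ℕ} {B : Set (EuclideanSpace ℝ (Fin (k + 1)))}
    (hB : IsESOCBlock B) {x y : EuclideanSpace ℝ (Fin (k + 1))} (hx : x ∈ B) (hy : y ∈ B)
    {t : ℝ} (ht : 0 ≤ t) : x + t • y ∈ B := by
  rcases hB with rfl | rfl | rfl | ⟨d, -, -, rfl⟩ | ⟨d, -, rfl⟩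
  · simp_all
  · trivial
  · exact add_smul_mem_SOC hx hy ht
  · change 0 ≤ ⟪d, x + t • y⟫
    rw [inner_add_right, real_inner_smul_right]
    exact add_nonneg hx (mul_nonneg ht hy)
  · obtain ⟨α, hα, rfl⟩ := hx
    obtain ⟨β, hβ, rfl⟩ := hy
    exact ⟨α + t * β, by positivity, by rw [add_smul, smul_smul]⟩

section RelaxedCone

variable {m : ℕ} {k : Fin m → ℕ} {B : ∀ i, Set (EuclideanSpace ℝ (Fin (k i + 1)))} {a : TS k}

lemma exists_tendsto_of_mem_relaxedBlocks (hB : IsESOC k B) (haK : a ∈ prodSet k B) {i : Fin m}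
    {x : EuclideanSpace ℝ (Fin (k i + 1))} (hx : x ∈ relaxedBlocks k B a i) :
    ∃ z : ℝ → EuclideanSpace ℝ (Fin (k i + 1)),
      (∀ᶠ t in atTop, z t ∈ B i) ∧ Tendsto (fun t => z t - t • a i) atTop (𝓝 x) := by
  have htranslate : Tendsto (fun t : ℝ => x + t • a i - t • a i) atTop (𝓝 x) := by
    simp only [add_sub_cancel_right, tendsto_const_nhds]
  unfold relaxedBlocks at hx
  split_ifs at hx with h1 h2
  · obtain ⟨hBi, hri⟩ := h1
    have hint := intrinsicInterior_subset_interior affineSpan_SOC hri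
    exact ⟨_, hBi ▸ eventually_add_smul_mem_SOC (norm_tail_lt_of_mem_interior_SOC hint) x,
      htranslate⟩
  · obtain ⟨hBi, -, ha0⟩ := h2
    exact hBi ▸ exists_tendsto_of_mem_halfSpace_reflect (hBi ▸ haK i) ha0 hx
  · exact ⟨_, (eventually_ge_atTop 0).mono fun t ht => (hB i).add_smul_mem hx (haK i) ht,
      htranslate⟩

lemma prodSet_subset_prodSet_relaxedBlocks (haK : a ∈ prodSet k B) :
    prodSet k B ⊆ prodSet k (relaxedBlocks k B a) := by
  intro x hx i
  unfold relaxedBlocks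
  split_ifs with h1 h2
  · trivial
  · obtain ⟨hBi, -⟩ := h2
    exact SOC_subset_halfSpace_reflect (hBi ▸ haK i) (hBi ▸ hx i)
  · exact hx i

lemma prodSet_relaxedBlocks_subset_closure (hB : IsESOC k B) (haK : a ∈ prodSet k B) :
    prodSet k (relaxedBlocks k B a) ⊆ closure (prodSet k B + (ℝ ∙ a : Set (TS k))) := fun _ hx =>
  have ⟨_, hzB, hzlim⟩ :=
    PiLp.exists_tendsto_sub_smul fun i => exists_tendsto_of_mem_relaxedBlocks hB haK (hx i)
  mem_closure_add_span_of_tendsto hzB hzlim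

end RelaxedCone

theorem relaxation_strongly_infeasible_iff_general {m : ℕ} (k : Fin m → ℕ)
    (B : ∀ i, Set (EuclideanSpace ℝ (Fin (k i + 1)))) (hB : IsESOC k B)
    (L : Submodule ℝ (TS k)) (c : TS k) (a : TS k)
    (haK : a ∈ prodSet k B) (haL : a ∈ L) :
    StronglyInfeasible (prodSet k B) L c ↔
      StronglyInfeasible (prodSet k (relaxedBlocks k B a)) L c := by
  have hspan : ∀ y ∈ affineSet L c, ∀ v ∈ (ℝ ∙ a : Set (TS k)), y - v ∈ affineSet L c :=
    fun y hy v hv => sub_mem_affineSet hy ((Submodule.span_singleton_le_iff_mem a L).2 haL hv)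
  rw [stronglyInfeasible_iff_setDist_pos, stronglyInfeasible_iff_setDist_pos,
    setDist_eq_of_subset_closure_add ⟨a, haK⟩ ⟨c, mem_affineSet_self L c⟩
      (prodSet_subset_prodSet_relaxedBlocks haK) (prodSet_relaxedBlocks_subset_closure hB haK)
      hspan]

/-- **Theorem 1(iii).** Let `(K, L, c)` be a feasibility problem where
`K = K^{n_1} × ⋯ × K^{n_m}` is an extended second order cone, `L` a linear subspace and
`c` a point.  Suppose there is a nonzero `a ∈ K ∩ L` with `H₁(a) ∪ H₂(a) ≠ ∅` and let `K̃`
be the relaxed cone obtained from `K` and `a`.  Then `(K, L, c)` is strongly infeasible if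
and only if `(K̃, L, c)` is strongly infeasible. -/
theorem relaxation_strongly_infeasible_iff {m : ℕ} (k : Fin m → ℕ)
    (B : ∀ i, Set (EuclideanSpace ℝ (Fin (k i + 1)))) (hB : IsESOC k B)
    (L : Submodule ℝ (TS k)) (c : TS k) (a : TS k)
    (haK : a ∈ prodSet k B) (haL : a ∈ L) (ha0 : a ≠ 0)
    (hH : (H1 k B a ∪ H2 k B a).Nonempty) :
    StronglyInfeasible (prodSet k B) L c ↔
      StronglyInfeasible (prodSet k (relaxedBlocks k B a)) L c :=
  relaxation_strongly_infeasible_iff_general k B hB L c a haK haL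

end
end

section
/- Let C₁ ⊆ ℝ^p × ℝ^q be a nonempty polyhedral convex set, C₂ ⊆ ℝ^p a nonempty closed convex set, and P ⊆ ℝ^q a nonempty polyhedral convex set. Suppose that rec C₁ ∩ (−(rec C₂ × rec P)) ⊆ lin C₂ × (−rec P). Then the set C₁ + (C₂ × P) is closed. -/
open scoped Pointwise

noncomputable section

/-- A set is polyhedral if it is the intersection of finitely many closed half-spaces
`{x : aᵀx ≤ b}`. -/
def IsPolyhedral {E : Type*} [AddCommGroup E] [Module ℝ E] (s : Set E) : Prop :=
  ∃ (N : ℕ) (f : Fin N → E →ₗ[ℝ] ℝ) (b : Fin N → ℝ), s = ⋂ j, {x | f j x ≤ b j}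

/-- The recession cone `rec C = {y : y + C ⊆ C}` of a set `C`. -/
def recCone {E : Type*} [AddCommGroup E] (s : Set E) : Set E :=
  {y | ∀ x ∈ s, y + x ∈ s}

/-- The lineality space `lin C = rec C ∩ (−rec C)` of a set `C`. -/
def linSpace {E : Type*} [AddCommGroup E] (s : Set E) : Set E :=
  recCone s ∩ (-recCone s)

/-!
Take `wₙ ∈ C₁ + (C₂ × P)` converging to `u` and split `wₙ = aₙ + bₙ` with `aₙ` of least norm
for a fixed Euclidean structure. If the `aₙ` were unbounded, a subsequence would escape along a
unit direction `d` with `d ∈ rec C₁` and `-d ∈ rec C₂ × rec P`, so `d ∈ lin C₂ × (-rec P)` by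
hypothesis. Polyhedral sets are retractive: along such a subsequence, eventually `aₙ - d ∈ C₁`
and `(bₙ)₂ + d₂ ∈ P`, while `(bₙ)₁ + d₁ ∈ C₂` because `d₁ ∈ rec C₂`. Then `aₙ - d` is an
admissible split with `‖aₙ - d‖² = ‖aₙ‖² - 2⟪aₙ, d⟫ + ‖d‖² < ‖aₙ‖²`, as `⟪aₙ, d⟫ → ∞`,
contradicting minimality. So the `aₙ` are bounded and a convergent subsequence exhibits
`u ∈ C₁ + (C₂ × P)`.
-/

open Filter Topology

variable {E F : Type*} [NormedAddCommGroup E] [NormedSpace ℝ E]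

theorem IsClosed.mem_recCone_of_tendsto {s : Set E} (hs : IsClosed s) (hconv : Convex ℝ s)
    {x : ℕ → E} (hx : ∀ n, x n ∈ s) {τ : ℕ → ℝ} (hτ : Tendsto τ atTop atTop) {d : E}
    (hd : Tendsto (fun n => (τ n)⁻¹ • x n) atTop (𝓝 d)) : d ∈ recCone s := by
  intro y hy
  have hlim : Tendsto (fun n => (1 - (τ n)⁻¹) • y + (τ n)⁻¹ • x n) atTop (𝓝 (d + y)) := by
    simpa [add_comm] using
      (((tendsto_const_nhds (x := (1 : ℝ))).sub hτ.inv_tendsto_atTop).smul_const y).add hd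
  refine hs.mem_of_tendsto hlim ?_
  filter_upwards [hτ.eventually_ge_atTop 1] with n hn
  exact hconv hy (hx n) (sub_nonneg.2 (inv_le_one_of_one_le₀ hn))
    (inv_nonneg.2 (zero_le_one.trans hn)) (sub_add_cancel _ _)

section Polyhedral

variable [FiniteDimensional ℝ E]

theorem IsPolyhedral.isClosed {s : Set E} (hs : IsPolyhedral s) : IsClosed s := by
  obtain ⟨N, f, b, rfl⟩ := hs
  exact isClosed_iInter fun j =>
    isClosed_le (f j).continuous_of_finiteDimensional continuous_const

theorem IsPolyhedral.eventually_sub_mem {s : Set E} (hs : IsPolyhedral s) {x : ℕ → E}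
    (hx : ∀ n, x n ∈ s) {τ : ℕ → ℝ} (hτ : Tendsto τ atTop atTop) {d : E}
    (hd : Tendsto (fun n => (τ n)⁻¹ • x n) atTop (𝓝 d)) : ∀ᶠ n in atTop, x n - d ∈ s := by
  obtain ⟨N, f, b, rfl⟩ := hs
  simp only [Set.mem_iInter, Set.mem_ofPred_eq, map_sub] at hx ⊢
  refine eventually_all.2 fun j => ?_
  rcases le_or_gt 0 (f j d) with hj | hj
  · exact Eventually.of_forall fun n => (sub_le_self _ hj).trans (hx n j)
  · have hlim : Tendsto (fun n => τ n * f j ((τ n)⁻¹ • x n)) atTop atBot :=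
      hτ.atTop_mul_neg hj (((f j).continuous_of_finiteDimensional.tendsto d).comp hd)
    filter_upwards [hlim.eventually_le_atBot (b j + f j d), hτ.eventually_gt_atTop 0]
      with n hn hτn
    rw [map_smul, smul_eq_mul, mul_inv_cancel_left₀ hτn.ne'] at hn
    linarith

end Polyhedral

theorem IsClosed.exists_isMinOn_norm_comp [NormedAddCommGroup F] [NormedSpace ℝ F]
    [FiniteDimensional ℝ F] {S : Set E} (hS : IsClosed S) (hne : S.Nonempty) (L : E ≃L[ℝ] F) :
    ∃ a ∈ S, IsMinOn (fun x => ‖L x‖) S a := by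
  obtain ⟨_, ⟨a, ha, rfl⟩, hmin⟩ :=
    (L.isClosed_image.2 hS).exists_infDist_eq_dist (hne.image L) 0
  refine ⟨a, ha, isMinOn_iff.2 fun x hx => ?_⟩
  simpa [hmin] using Metric.infDist_le_dist_of_mem (Set.mem_image_of_mem L hx) (x := 0)

theorem exists_subseq_tendsto_inv_norm_smul [ProperSpace E] {x : ℕ → E}
    (hx : Tendsto (fun n => ‖x n‖) atTop atTop) :
    ∃ d : E, ‖d‖ = 1 ∧ ∃ φ : ℕ → ℕ, StrictMono φ ∧
      Tendsto (fun n => ‖x (φ n)‖⁻¹ • x (φ n)) atTop (𝓝 d) := by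
  have hsphere : ∀ᶠ n in atTop, ‖x n‖⁻¹ • x n ∈ Metric.sphere (0 : E) 1 := by
    filter_upwards [hx.eventually_gt_atTop 0] with n hn
    rw [mem_sphere_zero_iff_norm, norm_smul, norm_inv, norm_norm, inv_mul_cancel₀ hn.ne']
  obtain ⟨d, hd, φ, hφ, hlim⟩ :=
    tendsto_subseq_of_frequently_bounded Metric.isBounded_sphere hsphere.frequently
  rw [Metric.isClosed_sphere.closure_eq, mem_sphere_zero_iff_norm] at hd
  exact ⟨d, hd, φ, hφ, hlim⟩

/-- The two-set version of Bertsekas' retractive sets. -/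
def IsRetractivePair (C D : Set E) : Prop :=
  ∀ (a b : ℕ → E) (τ : ℕ → ℝ) (d : E), (∀ n, a n ∈ C) → (∀ n, b n ∈ D) →
    Tendsto τ atTop atTop → Tendsto (fun n => (τ n)⁻¹ • a n) atTop (𝓝 d) →
    Tendsto (fun n => (τ n)⁻¹ • b n) atTop (𝓝 (-d)) →
    ∀ᶠ n in atTop, a n - d ∈ C ∧ b n + d ∈ D

namespace IsRetractivePair

variable {C D : Set E}

theorem eq_zero_of_isMinOn [NormedAddCommGroup F] [InnerProductSpace ℝ F]
    (h : IsRetractivePair C D) (L : E ≃L[ℝ] F) {w a : ℕ → E} {u d : E} {τ : ℕ → ℝ}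
    (hw : Tendsto w atTop (𝓝 u)) (ha : ∀ n, a n ∈ C ∧ w n - a n ∈ D)
    (hmin : ∀ n, IsMinOn (fun x => ‖L x‖) {x | x ∈ C ∧ w n - x ∈ D} (a n))
    (hτ : Tendsto τ atTop atTop) (hd : Tendsto (fun n => (τ n)⁻¹ • a n) atTop (𝓝 d)) :
    d = 0 := by
  by_contra hd0
  have hLd : 0 < ‖L d‖ ^ 2 := by
    have : L d ≠ 0 := by simpa using hd0
    positivity
  have hb : Tendsto (fun n => (τ n)⁻¹ • (w n - a n)) atTop (𝓝 (-d)) := by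
    simpa [smul_sub] using (hτ.inv_tendsto_atTop.smul hw).sub hd
  have hinner : Tendsto (fun n => inner ℝ (L (a n)) (L d)) atTop atTop := by
    have hlim :
        Tendsto (fun n => inner ℝ (L ((τ n)⁻¹ • a n)) (L d)) atTop (𝓝 (‖L d‖ ^ 2)) := by
      rw [← real_inner_self_eq_norm_sq]
      exact ((L.continuous.tendsto d).comp hd).inner tendsto_const_nhds
    refine (hτ.atTop_mul_pos hLd hlim).congr' ?_
    filter_upwards [hτ.eventually_gt_atTop 0] with n hn
    rw [map_smul, real_inner_smul_left, mul_inv_cancel_left₀ hn.ne']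
  obtain ⟨n, hpull, hlarge⟩ :=
    ((h a _ τ d (fun n => (ha n).1) (fun n => (ha n).2) hτ hd hb).and
      (hinner.eventually_gt_atTop (‖L d‖ ^ 2 / 2))).exists
  have hle : ‖L (a n)‖ ≤ ‖L (a n - d)‖ := isMinOn_iff.1 (hmin n) _
    ⟨hpull.1, by rw [sub_sub_eq_add_sub, add_sub_right_comm]; exact hpull.2⟩
  have hexpand :
      ‖L (a n - d)‖ ^ 2 = ‖L (a n)‖ ^ 2 - 2 * inner ℝ (L (a n)) (L d) + ‖L d‖ ^ 2 := by
    rw [map_sub, norm_sub_sq_real]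
  nlinarith [norm_nonneg (L (a n)), norm_nonneg (L (a n - d))]

theorem isClosed_add [FiniteDimensional ℝ E] (h : IsRetractivePair C D) (hC : IsClosed C)
    (hD : IsClosed D) : IsClosed (C + D) := by
  obtain ⟨L⟩ : Nonempty (E ≃L[ℝ] EuclideanSpace ℝ (Fin (Module.finrank ℝ E))) :=
    FiniteDimensional.nonempty_continuousLinearEquiv_of_finrank_eq finrank_euclideanSpace_fin.symm
  refine isSeqClosed_iff_isClosed.mp fun w u hw hu => ?_
  have hsplit : ∀ n, ∃ a ∈ {x | x ∈ C ∧ w n - x ∈ D},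
      IsMinOn (fun x => ‖L x‖) {x | x ∈ C ∧ w n - x ∈ D} a := by
    intro n
    obtain ⟨c, hc, e, he, hce⟩ := hw n
    exact (hC.inter (hD.preimage (continuous_const.sub continuous_id))).exists_isMinOn_norm_comp
      ⟨c, hc, by simpa [← hce] using he⟩ L
  choose a ha hmin using hsplit
  have hbdd : ∃ R, ∃ᶠ n in atTop, a n ∈ Metric.closedBall (0 : E) R := by
    by_contra! hesc
    have hnorm : Tendsto (fun n => ‖a n‖) atTop atTop :=
      tendsto_atTop.2 fun R => (hesc R).mono fun n hn =>
        (not_le.1 (mt mem_closedBall_zero_iff.2 hn)).le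
    obtain ⟨d, hd1, φ, hφ, hd⟩ := exists_subseq_tendsto_inv_norm_smul hnorm
    have hd0 := h.eq_zero_of_isMinOn L (hu.comp hφ.tendsto_atTop) (fun n => ha (φ n))
      (fun n => hmin (φ n)) (hnorm.comp hφ.tendsto_atTop) hd
    simp [hd0] at hd1
  obtain ⟨R, hR⟩ := hbdd
  obtain ⟨z, -, φ, hφ, hz⟩ :=
    tendsto_subseq_of_frequently_bounded Metric.isBounded_closedBall hR
  have hzC : z ∈ C := hC.mem_of_tendsto hz (.of_forall fun n => (ha (φ n)).1)
  have huz : u - z ∈ D :=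
    hD.mem_of_tendsto ((hu.comp hφ.tendsto_atTop).sub hz) (.of_forall fun n => (ha (φ n)).2)
  exact ⟨z, hzC, u - z, huz, add_sub_cancel z u⟩

end IsRetractivePair

theorem isRetractivePair_of_recCone_inter_neg_subset [NormedAddCommGroup F] [NormedSpace ℝ F]
    [FiniteDimensional ℝ E] [FiniteDimensional ℝ F] {C1 : Set (E × F)} {C2 : Set E} {P : Set F}
    (hC1poly : IsPolyhedral C1) (hC1conv : Convex ℝ C1) (hC2closed : IsClosed C2)
    (hC2conv : Convex ℝ C2) (hPpoly : IsPolyhedral P) (hPconv : Convex ℝ P)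
    (hrec : recCone C1 ∩ (-(recCone C2 ×ˢ recCone P)) ⊆ linSpace C2 ×ˢ (-recCone P)) :
    IsRetractivePair C1 (C2 ×ˢ P) := by
  intro a b τ d ha hb hτ hda hdb
  have hb1 : Tendsto (fun n => (τ n)⁻¹ • (b n).1) atTop (𝓝 (-d.1)) :=
    (continuous_fst.tendsto _).comp hdb
  have hb2 : Tendsto (fun n => (τ n)⁻¹ • (b n).2) atTop (𝓝 (-d.2)) :=
    (continuous_snd.tendsto _).comp hdb
  have hd : d ∈ linSpace C2 ×ˢ (-recCone P) :=
    hrec ⟨hC1poly.isClosed.mem_recCone_of_tendsto hC1conv ha hτ hda,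
      hC2closed.mem_recCone_of_tendsto hC2conv (fun n => (hb n).1) hτ hb1,
      hPpoly.isClosed.mem_recCone_of_tendsto hPconv (fun n => (hb n).2) hτ hb2⟩
  filter_upwards [hC1poly.eventually_sub_mem ha hτ hda,
    hPpoly.eventually_sub_mem (fun n => (hb n).2) hτ hb2] with n hC1n hPn
  refine ⟨hC1n, ?_, by simpa using hPn⟩
  simpa [add_comm] using hd.1.1 _ (hb n).1

theorem sum_closed_of_recession_condition_general {p q : ℕ}
    (C1 : Set (EuclideanSpace ℝ (Fin p) × EuclideanSpace ℝ (Fin q)))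
    (C2 : Set (EuclideanSpace ℝ (Fin p))) (P : Set (EuclideanSpace ℝ (Fin q)))
    (hC1poly : IsPolyhedral C1) (hC1conv : Convex ℝ C1)
    (hC2closed : IsClosed C2) (hC2conv : Convex ℝ C2)
    (hPpoly : IsPolyhedral P) (hPconv : Convex ℝ P)
    (hrec : recCone C1 ∩ (-(recCone C2 ×ˢ recCone P)) ⊆ linSpace C2 ×ˢ (-recCone P)) :
    IsClosed (C1 + C2 ×ˢ P) :=
  (isRetractivePair_of_recCone_inter_neg_subset hC1poly hC1conv hC2closed hC2conv hPpoly hPconv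
    hrec).isClosed_add hC1poly.isClosed (hC2closed.prod hPpoly.isClosed)

/-- **Proposition 1.** Let `C₁ ⊆ ℝ^p × ℝ^q` be a nonempty polyhedral convex set,
`C₂ ⊆ ℝ^p` a nonempty closed convex set and `P ⊆ ℝ^q` a nonempty polyhedral convex set.
Suppose that `rec C₁ ∩ (−(rec C₂ × rec P)) ⊆ lin C₂ × (−rec P)`.
Then `C₁ + (C₂ × P)` is closed. -/
theorem sum_closed_of_recession_condition {p q : ℕ}
    (C1 : Set (EuclideanSpace ℝ (Fin p) × EuclideanSpace ℝ (Fin q)))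
    (C2 : Set (EuclideanSpace ℝ (Fin p))) (P : Set (EuclideanSpace ℝ (Fin q)))
    (hC1ne : C1.Nonempty) (hC1poly : IsPolyhedral C1) (hC1conv : Convex ℝ C1)
    (hC2ne : C2.Nonempty) (hC2closed : IsClosed C2) (hC2conv : Convex ℝ C2)
    (hPne : P.Nonempty) (hPpoly : IsPolyhedral P) (hPconv : Convex ℝ P)
    (hrec : recCone C1 ∩ (-(recCone C2 ×ˢ recCone P)) ⊆ linSpace C2 ×ˢ (-recCone P)) :
    IsClosed (C1 + C2 ×ˢ P) :=
  sum_closed_of_recession_condition_general C1 C2 P hC1poly hC1conv hC2closed hC2conv hPpoly hPconv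
    hrec

end
end

section
/- Let C₁ ⊆ ℝ^p × ℝ^q be a nonempty polyhedral convex set, C₂ ⊆ ℝ^p a nonempty closed convex set, and P ⊆ ℝ^q a nonempty polyhedral convex set. Suppose that rec C₁ ∩ (rec C₂ × rec P) ⊆ lin C₂ × rec P and that C₁ ∩ (C₂ × P) = ∅. Then C₁ and C₂ × P can be strongly separated; in particular, the Euclidean distance between C₁ and C₂ × P is strictly positive. -/
/-!
Lift everything to `(X × Y) × Y`: there `A = C₁ ×ˢ P` is a polyhedron and
`B = {((x, y), y') | x ∈ C₂, y = y'}` is closed and convex, `A ∩ B = ∅`, and the recession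
hypothesis becomes `rec A ∩ rec B ⊆ lin B`. For a polyhedron `A = {x | ∀ j, f j x ≤ c j}` and such
a `B`, the violation `max_j (f j x - c j)` is bounded away from `0` on `B`. If no nonzero vector
of `lin B` is a recession direction of `A`, the relevant sublevel sets of `B` are compact.
Otherwise take such a direction `d`: the constraints strictly decreasing along `d` can be
dropped, `B` can be sliced by a hyperplane transverse to `d`, and we induct on the dimension of
`span (lin B)`. This uniform bound gives a positive distance, and Hahn–Banach applied to the
thickened sets gives the strong separation.
-/

open scoped Pointwise

noncomputable section

open Filter Topology

section RecCone

variable {E : Type*} [AddCommGroup E] {B : Set E} {x y d : E}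

theorem add_mem_recCone (hy : y ∈ recCone B) (hd : d ∈ recCone B) : y + d ∈ recCone B :=
  fun z hz => by rw [add_assoc]; exact hy _ (hd z hz)

variable [Module ℝ E]

theorem Convex.add_smul_mem_of_mem_recCone (hB : Convex ℝ B) (hx : x ∈ B) (hy : y ∈ recCone B)
    {t : ℝ} (ht : 0 ≤ t) : x + t • y ∈ B := by
  have hn : ∀ n : ℕ, x + (n : ℝ) • y ∈ B := by
    intro n
    induction n with
    | zero => simpa using hx
    | succ n ih => simpa [add_smul, add_comm, add_left_comm] using hy _ ih
  obtain ⟨n, hn0, htn⟩ : ∃ n : ℕ, (0 : ℝ) < n ∧ t ≤ n :=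
    ⟨⌈t⌉₊ + 1, by positivity, (Nat.le_ceil t).trans (by simp)⟩
  simpa [smul_smul, div_mul_cancel₀ _ hn0.ne'] using
    hB.add_smul_mem hx (hn n) ⟨div_nonneg ht hn0.le, (div_le_one hn0).2 htn⟩

theorem Convex.smul_mem_recCone (hB : Convex ℝ B) (hy : y ∈ recCone B) {t : ℝ} (ht : 0 ≤ t) :
    t • y ∈ recCone B :=
  fun z hz => by rw [add_comm]; exact hB.add_smul_mem_of_mem_recCone hz hy ht

theorem Convex.add_smul_mem_of_mem_linSpace (hB : Convex ℝ B) (hx : x ∈ B) (hy : y ∈ linSpace B)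
    (t : ℝ) : x + t • y ∈ B := by
  rcases le_total 0 t with ht | ht
  · exact hB.add_smul_mem_of_mem_recCone hx hy.1 ht
  · simpa using hB.add_smul_mem_of_mem_recCone hx hy.2 (neg_nonneg.2 ht)

section Slice

variable {g : E →ₗ[ℝ] ℝ} (hB : Convex ℝ B) (hd : d ∈ linSpace B) (hgd : g d = 1)
include hB hd hgd

theorem Convex.sub_smul_mem_inter_ker (hx : x ∈ B) : x - g x • d ∈ B ∩ LinearMap.ker g := by
  refine ⟨?_, by simp [hgd]⟩
  simpa [sub_eq_add_neg] using hB.add_smul_mem_of_mem_linSpace hx hd (-g x)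

theorem Convex.recCone_inter_ker (hBne : B.Nonempty) :
    recCone (B ∩ LinearMap.ker g) = recCone B ∩ LinearMap.ker g := by
  ext v
  constructor
  · intro hv
    obtain ⟨x₀, hx₀⟩ := hBne
    have hx₀' := hv _ (hB.sub_smul_mem_inter_ker hd hgd hx₀)
    refine ⟨fun x hx => ?_, ?_⟩
    · simpa [add_assoc] using hB.add_smul_mem_of_mem_linSpace
        (hv _ (hB.sub_smul_mem_inter_ker hd hgd hx)).1 hd (g x)
    · simpa [hgd] using hx₀'.2
  · rintro ⟨hv, hgv⟩ x ⟨hx, hgx⟩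
    exact ⟨hv x hx, by simp_all⟩

theorem Convex.linSpace_inter_ker (hBne : B.Nonempty) :
    linSpace (B ∩ LinearMap.ker g) = linSpace B ∩ LinearMap.ker g := by
  ext v
  simp only [linSpace, Set.mem_inter_iff, Set.mem_neg, hB.recCone_inter_ker hd hgd hBne,
    SetLike.mem_coe, LinearMap.mem_ker, map_neg, neg_eq_zero]
  tauto

theorem Convex.finrank_span_linSpace_inter_ker_lt [FiniteDimensional ℝ E] (hBne : B.Nonempty) :
    Module.finrank ℝ (Submodule.span ℝ (linSpace (B ∩ LinearMap.ker g))) <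
      Module.finrank ℝ (Submodule.span ℝ (linSpace B)) := by
  rw [hB.linSpace_inter_ker hd hgd hBne]
  have hle : Submodule.span ℝ (linSpace B ∩ LinearMap.ker g) ≤
      Submodule.span ℝ (linSpace B) ⊓ LinearMap.ker g :=
    Submodule.span_le.2 fun v hv => ⟨Submodule.subset_span hv.1, hv.2⟩
  have hlt : Submodule.span ℝ (linSpace B) ⊓ LinearMap.ker g < Submodule.span ℝ (linSpace B) :=
    inf_lt_left.2 fun h => by simpa [hgd] using h (Submodule.subset_span hd)
  exact Submodule.finrank_lt_finrank_of_lt (hle.trans_lt hlt)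

end Slice

end RecCone

theorem exists_nonneg_forall_add_mul_nonpos {ι : Type*} [Finite ι] {a b : ι → ℝ}
    (hb : ∀ j, b j ≤ 0) (ha : ∀ j, b j = 0 → a j ≤ 0) : ∃ t ≥ 0, ∀ j, a j + t * b j ≤ 0 := by
  have : ∀ᶠ t in atTop, 0 ≤ t ∧ ∀ j, a j + t * b j ≤ 0 := by
    refine (eventually_ge_atTop 0).and (eventually_all.2 fun j => ?_)
    rcases (hb j).lt_or_eq with hbj | hbj
    · exact (tendsto_atBot_add_const_left _ (a j)
        (tendsto_id.atTop_mul_const_of_neg hbj)).eventually_le_atBot 0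
    · simp [hbj, ha j hbj]
  exact this.exists

section Direction

variable {E : Type*} [AddCommGroup E] [Module ℝ E] {B : Set E} {d : E}
  {ι : Type*} [Finite ι] {f : ι → E →ₗ[ℝ] ℝ} {c : ι → ℝ}
  (hB : Convex ℝ B) (hd : d ∈ recCone B) (hfd : ∀ j, f j d ≤ 0)
include hB hd hfd

theorem Convex.exists_eq_zero_lt_of_mem_recCone (hdisj : ∀ x ∈ B, ∃ j, c j < f j x) {x : E}
    (hx : x ∈ B) : ∃ j, f j d = 0 ∧ c j < f j x := by
  by_contra! h
  obtain ⟨t, ht, hle⟩ := exists_nonneg_forall_add_mul_nonpos (a := fun j => f j x - c j) hfd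
    fun j hj => sub_nonpos.2 (h j hj)
  obtain ⟨j, hj⟩ := hdisj _ (hB.add_smul_mem_of_mem_recCone hx hd ht)
  have := hle j
  simp only [map_add, map_smul, smul_eq_mul] at hj
  linarith

theorem Convex.mem_linSpace_of_mem_recCone
    (hrec : ∀ y ∈ recCone B, (∀ j, f j y ≤ 0) → y ∈ linSpace B) {y : E} (hy : y ∈ recCone B)
    (hfy : ∀ j, f j d = 0 → f j y ≤ 0) : y ∈ linSpace B := by
  obtain ⟨t, ht, hle⟩ := exists_nonneg_forall_add_mul_nonpos hfd hfy
  have htd := hB.smul_mem_recCone hd ht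
  have hlin := hrec _ (add_mem_recCone hy htd) fun j => by simpa using hle j
  refine ⟨hy, Set.mem_neg.2 ?_⟩
  simpa using add_mem_recCone (Set.mem_neg.1 hlin.2) htd

end Direction

section Normed

variable {E : Type*} [NormedAddCommGroup E] [NormedSpace ℝ E] {B : Set E}

theorem IsClosed.mem_recCone_of_tendsto_smul (hBc : IsClosed B) (hB : Convex ℝ B) {α : Type*}
    {l : Filter α} [l.NeBot] {x : α → E} {r : α → ℝ} {d : E} (hx : ∀ n, x n ∈ B)
    (hr : ∀ n, 0 ≤ r n) (hr0 : Tendsto r l (𝓝 0)) (hd : Tendsto (fun n => r n • x n) l (𝓝 d)) :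
    d ∈ recCone B := by
  intro w hw
  have hlim : Tendsto (fun n => w + r n • x n - r n • w) l (𝓝 (d + w)) := by
    simpa [add_comm] using (tendsto_const_nhds.add hd).sub (hr0.smul_const w)
  refine hBc.mem_of_tendsto hlim ?_
  filter_upwards [hr0.eventually_le_const zero_lt_one] with n hn
  convert hB hw (hx n) (sub_nonneg.2 hn) (hr n) (by ring) using 1
  module

variable [FiniteDimensional ℝ E] {ι : Type*} {f : ι → E →ₗ[ℝ] ℝ}

theorem IsClosed.isBounded_of_recCone (hBc : IsClosed B) (hB : Convex ℝ B)
    (hdir : ∀ y ∈ recCone B, (∀ j, f j y ≤ 0) → y = 0) (b : ι → ℝ) :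
    Bornology.IsBounded {x ∈ B | ∀ j, f j x ≤ b j} := by
  by_contra hunb
  simp only [isBounded_iff_forall_norm_le, not_exists, not_forall, not_le] at hunb
  choose x hx hxn using fun n : ℕ => hunb n
  have hpos : ∀ n, 0 < ‖x n‖ := fun n => (Nat.cast_nonneg n).trans_lt (hxn n)
  have hsph : ∀ n, ‖x n‖⁻¹ • x n ∈ Metric.sphere (0 : E) 1 := fun n => by
    simp [norm_smul, (hpos n).ne']
  obtain ⟨d, hd1, φ, hφ, hφd⟩ := (isCompact_sphere (0 : E) 1).tendsto_subseq hsph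
  have hr0 : Tendsto (fun n => ‖x (φ n)‖⁻¹) atTop (𝓝 0) :=
    tendsto_inv_atTop_zero.comp <| (tendsto_atTop_mono (fun n => (hxn n).le)
      tendsto_natCast_atTop_atTop).comp hφ.tendsto_atTop
  have hdrec : d ∈ recCone B := hBc.mem_recCone_of_tendsto_smul hB (fun n => (hx (φ n)).1)
    (fun n => inv_nonneg.2 (norm_nonneg _)) hr0 hφd
  have hfd : ∀ j, f j d ≤ 0 := fun j => by
    refine le_of_tendsto_of_tendsto ((f j).continuous_of_finiteDimensional.tendsto d |>.comp hφd)
      (by simpa using hr0.mul_const (b j)) (Eventually.of_forall fun n => ?_)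
    simpa using mul_le_mul_of_nonneg_left ((hx (φ n)).2 j) (inv_nonneg.2 (norm_nonneg (x (φ n))))
  simp [hdir d hdrec hfd] at hd1

theorem IsClosed.exists_pos_forall_exists_add_le_of_isBounded (hBc : IsClosed B) {c : ι → ℝ}
    (hbdd : Bornology.IsBounded {x ∈ B | ∀ j, f j x ≤ c j + 1})
    (hdisj : ∀ x ∈ B, ∃ j, c j < f j x) : ∃ δ > 0, ∀ x ∈ B, ∃ j, c j + δ ≤ f j x := by
  by_contra! h
  choose x hx hxc using fun n : ℕ => h (1 / (n + 1)) Nat.one_div_pos_of_nat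
  have hxS : ∀ n, x n ∈ {x ∈ B | ∀ j, f j x ≤ c j + 1} := fun n =>
    ⟨hx n, fun j =>
      (hxc n j).le.trans (by gcongr; exact div_le_one_of_le₀ (by simp) (by positivity))⟩
  obtain ⟨a, ha, φ, hφ, hφa⟩ := tendsto_subseq_of_bounded hbdd hxS
  have haB : a ∈ B := hBc.closure_subset_iff.2 (fun y hy => hy.1) ha
  obtain ⟨j, hj⟩ := hdisj a haB
  have : f j a ≤ c j := by
    refine le_of_tendsto_of_tendsto ((f j).continuous_of_finiteDimensional.tendsto a |>.comp hφa)
      (by simpa using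
        (tendsto_one_div_add_atTop_nhds_zero_nat.comp hφ.tendsto_atTop).const_add (c j))
      (Eventually.of_forall fun n => (hxc (φ n) j).le)
  exact hj.not_ge this

end Normed

section Polyhedral

variable {E : Type*} [NormedAddCommGroup E] [NormedSpace ℝ E] [FiniteDimensional ℝ E]

theorem IsClosed.exists_pos_forall_exists_add_le {ι : Type*} [Finite ι] (f : ι → E →ₗ[ℝ] ℝ)
    (c : ι → ℝ) {B : Set E} (hBc : IsClosed B) (hB : Convex ℝ B)
    (hrec : ∀ y ∈ recCone B, (∀ j, f j y ≤ 0) → y ∈ linSpace B)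
    (hdisj : ∀ x ∈ B, ∃ j, c j < f j x) : ∃ δ > 0, ∀ x ∈ B, ∃ j, c j + δ ≤ f j x := by
  rcases B.eq_empty_or_nonempty with rfl | hBne
  · exact ⟨1, one_pos, by simp⟩
  by_cases hdir : ∃ d ∈ linSpace B, d ≠ 0 ∧ ∀ j, f j d ≤ 0
  · obtain ⟨d, hd, hd0, hfd⟩ := hdir
    obtain ⟨g, hgd⟩ := Module.Projective.exists_dual_eq_one ℝ hd0
    have hlt := hB.finrank_span_linSpace_inter_ker_lt hd hgd hBne
    have hB₀ : Convex ℝ (B ∩ LinearMap.ker g) := hB.inter (LinearMap.ker g).convex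
    obtain ⟨δ, hδ, hsep⟩ := IsClosed.exists_pos_forall_exists_add_le
      (fun j : {j // f j d = 0} => f j) (fun j => c j)
      (hBc.inter (LinearMap.ker g).closed_of_finiteDimensional) hB₀
      (fun y hy hfy => by
        rw [hB.recCone_inter_ker hd hgd hBne] at hy
        rw [hB.linSpace_inter_ker hd hgd hBne]
        exact ⟨hB.mem_linSpace_of_mem_recCone hd.1 hfd hrec hy.1 fun j hj => hfy ⟨j, hj⟩, hy.2⟩)
      (fun x hx => by
        obtain ⟨j, hj, hjx⟩ := hB.exists_eq_zero_lt_of_mem_recCone hd.1 hfd hdisj hx.1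
        exact ⟨⟨j, hj⟩, hjx⟩)
    refine ⟨δ, hδ, fun x hx => ?_⟩
    obtain ⟨⟨j, hj⟩, hjx⟩ := hsep _ (hB.sub_smul_mem_inter_ker hd hgd hx)
    exact ⟨j, by simpa [hj] using hjx⟩
  · refine hBc.exists_pos_forall_exists_add_le_of_isBounded
      (hBc.isBounded_of_recCone hB (fun y hy hfy => ?_) _) hdisj
    by_contra hy0
    exact hdir ⟨y, hrec y hy hfy, hy0, hfy⟩
termination_by Module.finrank ℝ (Submodule.span ℝ (linSpace B))

theorem exists_pos_forall_apply_le_mul_norm {ι : Type*} [Finite ι] (f : ι → E →ₗ[ℝ] ℝ) :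
    ∃ K > 0, ∀ j x, f j x ≤ K * ‖x‖ := by
  have : ∀ᶠ K in atTop, 0 < K ∧ ∀ j x, f j x ≤ K * ‖x‖ :=
    (eventually_gt_atTop 0).and <| eventually_all.2 fun j =>
      (eventually_ge_atTop ‖LinearMap.toContinuousLinearMap (f j)‖).mono fun K hK x =>
        calc f j x ≤ ‖LinearMap.toContinuousLinearMap (f j) x‖ := Real.le_norm_self _
          _ ≤ ‖LinearMap.toContinuousLinearMap (f j)‖ * ‖x‖ := ContinuousLinearMap.le_opNorm _ _
          _ ≤ K * ‖x‖ := by gcongr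
  exact this.exists

theorem IsPolyhedral.exists_pos_le_dist {A B : Set E} (hA : IsPolyhedral A) (hBc : IsClosed B)
    (hB : Convex ℝ B) (hrec : recCone A ∩ recCone B ⊆ linSpace B) (hdisj : Disjoint A B) :
    ∃ δ > 0, ∀ a ∈ A, ∀ b ∈ B, δ ≤ dist a b := by
  obtain ⟨N, f, c, rfl⟩ := hA
  have hmem : ∀ {x}, x ∈ ⋂ j, {x | f j x ≤ c j} ↔ ∀ j, f j x ≤ c j := by simp
  obtain ⟨δ, hδ, hsep⟩ := hBc.exists_pos_forall_exists_add_le f c hB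
    (fun y hy hfy => hrec ⟨fun x hx => hmem.2 fun j => by
      simpa using add_le_add (hfy j) (hmem.1 hx j), hy⟩)
    (fun x hx => by simpa [hmem] using Set.disjoint_right.1 hdisj hx)
  obtain ⟨K, hK, hfK⟩ := exists_pos_forall_apply_le_mul_norm f
  refine ⟨δ / K, div_pos hδ hK, fun a ha b hb => ?_⟩
  obtain ⟨j, hj⟩ := hsep b hb
  have hba := hfK j (b - a)
  have ha := hmem.1 ha j
  rw [map_sub] at hba
  rw [div_le_iff₀ hK, dist_comm, dist_eq_norm]
  linarith

end Polyhedral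

section Product

variable {X Y : Type*}

theorem IsPolyhedral.prod [AddCommGroup X] [Module ℝ X] [AddCommGroup Y] [Module ℝ Y]
    {s : Set X} {t : Set Y} (hs : IsPolyhedral s) (ht : IsPolyhedral t) :
    IsPolyhedral (s ×ˢ t) := by
  obtain ⟨N₁, f₁, c₁, rfl⟩ := hs
  obtain ⟨N₂, f₂, c₂, rfl⟩ := ht
  refine ⟨N₁ + N₂, fun j => Sum.elim (fun i => f₁ i ∘ₗ LinearMap.fst ℝ X Y)
    (fun i => f₂ i ∘ₗ LinearMap.snd ℝ X Y) (finSumFinEquiv.symm j),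
    fun j => Sum.elim c₁ c₂ (finSumFinEquiv.symm j), ?_⟩
  ext z
  simp [Fin.forall_fin_add]

theorem recCone_prod_subset [AddCommGroup X] [AddCommGroup Y] {s : Set X} {t : Set Y}
    (hs : s.Nonempty) (ht : t.Nonempty) : recCone (s ×ˢ t) ⊆ recCone s ×ˢ recCone t := by
  obtain ⟨a, ha⟩ := hs
  obtain ⟨b, hb⟩ := ht
  exact fun y hy => ⟨fun x hx => (hy (x, b) ⟨hx, hb⟩).1, fun x hx => (hy (a, x) ⟨ha, hx⟩).2⟩

end Product

section Lift

variable {X Y : Type*} [NormedAddCommGroup X] [NormedSpace ℝ X] [FiniteDimensional ℝ X]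
  [NormedAddCommGroup Y] [NormedSpace ℝ Y] [FiniteDimensional ℝ Y]

theorem IsPolyhedral.exists_pos_le_dist_prod {C₁ : Set (X × Y)} {C₂ : Set X} {P : Set Y}
    (hC₁ : IsPolyhedral C₁) (hC₁ne : C₁.Nonempty) (hC₂c : IsClosed C₂) (hC₂ : Convex ℝ C₂)
    (hC₂ne : C₂.Nonempty) (hP : IsPolyhedral P) (hPne : P.Nonempty)
    (hrec : recCone C₁ ∩ (recCone C₂ ×ˢ recCone P) ⊆ linSpace C₂ ×ˢ recCone P)
    (hdisj : Disjoint C₁ (C₂ ×ˢ P)) : ∃ δ > 0, ∀ u ∈ C₁, ∀ v ∈ C₂ ×ˢ P, δ ≤ dist u v := by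
  let B : Set ((X × Y) × Y) := {z | z.1.1 ∈ C₂ ∧ z.1.2 = z.2}
  have hBc : IsClosed B :=
    (hC₂c.preimage (by fun_prop)).inter (isClosed_eq (by fun_prop) (by fun_prop))
  have hB : Convex ℝ B := fun z hz w hw a b ha hb hab =>
    ⟨hC₂ hz.1 hw.1 ha hb hab, by simp [hz.2, hw.2]⟩
  have mem_recCone_B : ∀ y : (X × Y) × Y, y.1.1 ∈ recCone C₂ → y.1.2 = y.2 → y ∈ recCone B :=
    fun y h₁ h₂ z hz => ⟨h₁ _ hz.1, by simp [h₂, hz.2]⟩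
  have recCone_B : ∀ y ∈ recCone B, y.1.1 ∈ recCone C₂ ∧ y.1.2 = y.2 := by
    obtain ⟨x₀, hx₀⟩ := hC₂ne
    exact fun y hy => ⟨fun x hx => (hy ((x, 0), 0) ⟨hx, rfl⟩).1,
      by simpa using (hy ((x₀, 0), 0) ⟨hx₀, rfl⟩).2⟩
  have hrecAB : recCone (C₁ ×ˢ P) ∩ recCone B ⊆ linSpace B := by
    rintro y ⟨hyA, hyB⟩
    obtain ⟨hy₁, hy₂⟩ := recCone_B y hyB
    obtain ⟨hyC₁, hyP⟩ := recCone_prod_subset hC₁ne hPne hyA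
    have hlin := (hrec ⟨hyC₁, hy₁, hy₂ ▸ hyP⟩).1
    exact ⟨hyB, mem_recCone_B _ hlin.2 (by simp [hy₂])⟩
  have hdisjAB : Disjoint (C₁ ×ˢ P) B := by
    rw [Set.disjoint_left]
    rintro ⟨u, w⟩ ⟨hu, hw⟩ ⟨hu₁, huw⟩
    exact Set.disjoint_left.1 hdisj hu ⟨hu₁, huw ▸ hw⟩
  obtain ⟨δ, hδ, h⟩ := (hC₁.prod hP).exists_pos_le_dist hBc hB hrecAB hdisjAB
  refine ⟨δ, hδ, fun u hu v hv => ?_⟩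
  simpa [Prod.dist_eq] using h (u, v.2) ⟨hu, hv.2⟩ (v, v.2) ⟨hv.1, rfl⟩

end Lift

theorem Convex.exists_separating_add_ball_of_le_dist {E : Type*} [NormedAddCommGroup E]
    [NormedSpace ℝ E] {s t : Set E} (hs : Convex ℝ s) (ht : Convex ℝ t) {δ : ℝ}
    (hst : ∀ x ∈ s, ∀ y ∈ t, δ ≤ dist x y) :
    ∃ (f : StrongDual ℝ E) (α : ℝ), (∀ x ∈ s, ∀ u ∈ Metric.ball 0 (δ / 2), f (x + u) < α) ∧
      ∀ y ∈ t, ∀ u ∈ Metric.ball 0 (δ / 2), α < f (y + u) := by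
  have hdisj : Disjoint (s + Metric.ball 0 (δ / 2)) (t + Metric.ball 0 (δ / 2)) := by
    rw [Set.disjoint_left]
    rintro _ ⟨x, hx, u, hu, rfl⟩ ⟨y, hy, v, hv, hxy⟩
    rw [mem_ball_zero_iff] at hu hv
    have : dist x y ≤ ‖v‖ + ‖u‖ := by
      rw [dist_eq_norm, show x - y = v - u from sub_eq_sub_iff_add_eq_add.2 (by
        simp only at hxy; rw [add_comm v, hxy])]
      exact norm_sub_le v u
    linarith [hst x hx y hy]
  obtain ⟨f, α, hf₁, hf₂⟩ := geometric_hahn_banach_open_open (hs.add (convex_ball 0 _))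
    Metric.isOpen_ball.add_left (ht.add (convex_ball 0 _)) Metric.isOpen_ball.add_left hdisj
  exact ⟨f, α, fun x hx u hu => hf₁ _ (Set.add_mem_add hx hu),
    fun y hy u hu => hf₂ _ (Set.add_mem_add hy hu)⟩

theorem le_setDist {V : Type*} [NormedAddCommGroup V] {A B : Set V} (hA : A.Nonempty)
    (hB : B.Nonempty) {δ : ℝ} (h : ∀ a ∈ A, ∀ b ∈ B, δ ≤ dist a b) : δ ≤ setDist A B :=
  le_csInf (hA.image2 hB) (Set.forall_mem_image2.2 h)

/-- **Proposition 2.** Let `C₁ ⊆ ℝ^p × ℝ^q` be a nonempty polyhedral convex set,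
`C₂ ⊆ ℝ^p` a nonempty closed convex set and `P ⊆ ℝ^q` a nonempty polyhedral convex set.
Suppose that `rec C₁ ∩ (rec C₂ × rec P) ⊆ lin C₂ × rec P` and that `C₁ ∩ (C₂ × P) = ∅`.
Then `C₁` and `C₂ × P` can be strongly separated (there is a hyperplane and a ball centered
at the origin such that the two sets thickened by the ball lie in opposite open
half-spaces); in particular the distance between `C₁` and `C₂ × P` is strictly positive. -/
theorem strongly_separated_of_recession_condition {p q : ℕ}
    (C1 : Set (EuclideanSpace ℝ (Fin p) × EuclideanSpace ℝ (Fin q)))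
    (C2 : Set (EuclideanSpace ℝ (Fin p))) (P : Set (EuclideanSpace ℝ (Fin q)))
    (hC1ne : C1.Nonempty) (hC1poly : IsPolyhedral C1) (hC1conv : Convex ℝ C1)
    (hC2ne : C2.Nonempty) (hC2closed : IsClosed C2) (hC2conv : Convex ℝ C2)
    (hPne : P.Nonempty) (hPpoly : IsPolyhedral P) (hPconv : Convex ℝ P)
    (hrec : recCone C1 ∩ (recCone C2 ×ˢ recCone P) ⊆ linSpace C2 ×ˢ recCone P)
    (hdisj : C1 ∩ C2 ×ˢ P = ∅) :
    (∃ (f : (EuclideanSpace ℝ (Fin p) × EuclideanSpace ℝ (Fin q)) →ₗ[ℝ] ℝ) (α ε : ℝ),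
      0 < ε ∧
      (∀ x ∈ C1, ∀ u ∈ Metric.ball (0 : EuclideanSpace ℝ (Fin p) × EuclideanSpace ℝ (Fin q)) ε,
        f (x + u) < α) ∧
      (∀ y ∈ C2 ×ˢ P, ∀ u ∈ Metric.ball (0 : EuclideanSpace ℝ (Fin p) × EuclideanSpace ℝ (Fin q)) ε,
        α < f (y + u))) ∧
    0 < setDist C1 (C2 ×ˢ P) := by
  obtain ⟨δ, hδ, hdist⟩ := hC1poly.exists_pos_le_dist_prod hC1ne hC2closed hC2conv hC2ne hPpoly
    hPne hrec (Set.disjoint_iff_inter_eq_empty.2 hdisj)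
  obtain ⟨f, α, hf₁, hf₂⟩ :=
    hC1conv.exists_separating_add_ball_of_le_dist (hC2conv.prod hPconv) hdist
  exact ⟨⟨f, α, δ / 2, half_pos hδ, hf₁, hf₂⟩,
    hδ.trans_le (le_setDist hC1ne (hC2ne.prod hPne) hdist)⟩

end
end
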